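/- arXiv:1702.05342 — 3 statements merged into one kernel-verified Lean document; each statement's English description precedes it below -/
import Mathlib

section
/- Let (S,·,τ,τ*,κ) be a finite ⊕-algebra and let u be a nonempty countable word over S with domain α such that π₀^(u) is defined. Then every evaluation tree (T,γ) with respect to π₀^ over u satisfies γ(α) = π₀^(u). -/
/-- `sPow mul a n = a^(n+1)`: iterated product of `a` with itself. -/
def sPow {S : Type} (mul : S → S → S) (a : S) : ℕ → S
  | 0 => a
  | n + 1 => mul a (sPow mul a n)

/-- Axioms (A1)–(A4) of a ⊕-algebra `(S, ·, τ, τ*, κ)`. -/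
def PlusAlgAxioms {S : Type} (mul : S → S → S) (tau taustar : S → S)
    (kappa : Set S → S) : Prop :=
  -- (A1) associativity
  (∀ a b c : S, mul (mul a b) c = mul a (mul b c)) ∧
  -- (A2) τ is compatible to the right
  (∀ a b : S, tau (mul a b) = mul a (tau (mul b a))) ∧
  (∀ (a : S) (n : ℕ), tau (sPow mul a n) = tau a) ∧
  -- (A3) τ* is compatible to the left
  (∀ a b : S, taustar (mul b a) = mul (taustar (mul a b)) a) ∧
  (∀ (a : S) (n : ℕ), taustar (sPow mul a n) = taustar a) ∧
  -- (A4) κ is compatible with shuffles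
  ∀ P : Set S, P.Nonempty → ∀ c ∈ P, ∀ P' ⊆ P, ∀ P'' : Set S, P''.Nonempty →
    P'' ⊆ {x | x = kappa P ∨ (∃ a ∈ P, x = mul a (kappa P)) ∨
                (∃ b ∈ P, x = mul (kappa P) b) ∨
                (∃ a ∈ P, ∃ b ∈ P, x = mul (mul a (kappa P)) b)} →
      kappa P = mul (kappa P) (kappa P) ∧
      kappa P = mul (kappa P) (mul c (kappa P)) ∧
      kappa P = tau (kappa P) ∧
      kappa P = tau (mul (kappa P) c) ∧
      kappa P = taustar (kappa P) ∧
      kappa P = taustar (mul c (kappa P)) ∧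
      kappa P = kappa (P' ∪ P'')

/-- Axioms (A1)–(A5) of a ◦-algebra `(S, 1, ·, τ, τ*, κ)`. -/
def OAlgAxioms {S : Type} (one : S) (mul : S → S → S) (tau taustar : S → S)
    (kappa : Set S → S) : Prop :=
  PlusAlgAxioms mul tau taustar kappa ∧
  -- (A5)
  (∀ x : S, mul x one = x) ∧ (∀ x : S, mul one x = x) ∧
  tau one = one ∧ taustar one = one ∧ kappa {one} = one ∧
  ∀ P : Set S, P.Nonempty → kappa (P ∪ {one}) = kappa P
section Trees

variable {α : Type}

/-- `I < J` pointwise, for subsets of a linear order. -/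
def SetLT [LinearOrder α] (I J : Set α) : Prop := ∀ x ∈ I, ∀ y ∈ J, x < y

/-- `I` is a convex subset of the suborder induced on `R`. -/
def ConvexIn [LinearOrder α] (R I : Set α) : Prop :=
  ∀ x ∈ I, ∀ y ∈ I, ∀ z ∈ R, x < z → z < y → z ∈ I

/-- `T` is a condensation tree over the suborder induced on `R`:
a set of nonempty convex subsets of `R` containing the root `R`, pairwise
comparable-or-disjoint, such that the union of the members properly contained
in a given member is that member or empty, and all chains are finite. -/
structure IsCondTreeOn [LinearOrder α] (R : Set α) (T : Set (Set α)) : Prop where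
  root_mem : R ∈ T
  mem_subset : ∀ I ∈ T, I ⊆ R
  mem_nonempty : ∀ I ∈ T, I.Nonempty
  mem_convex : ∀ I ∈ T, ConvexIn R I
  comparable_or_disjoint : ∀ I ∈ T, ∀ J ∈ T, I ⊆ J ∨ J ⊆ I ∨ I ∩ J = ∅
  children_union : ∀ I ∈ T,
    ⋃₀ {J | J ∈ T ∧ J ⊂ I} = I ∨ ⋃₀ {J | J ∈ T ∧ J ⊂ I} = ∅
  chains_finite : ∀ C ⊆ T, IsChain (· ⊆ ·) C → C.Finite

/-- A leaf of `T`: a member minimal with respect to inclusion. -/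
def IsLeafOf (T : Set (Set α)) (I : Set α) : Prop :=
  I ∈ T ∧ ∀ J ∈ T, J ⊆ I → J = I

/-- `J` is a child of `I` in `T`: a maximal member of `T` properly contained in `I`. -/
def IsChildOf (T : Set (Set α)) (J I : Set α) : Prop :=
  J ∈ T ∧ J ⊂ I ∧ ∀ K ∈ T, J ⊂ K → I ⊆ K

end Trees
/-- The restriction to `D` of the labelled family `lab`, with positions ordered by the
strict ordering `r`, is an η-shuffle of the set of letters `P`: `D` is countable,
nonempty, without endpoints, every letter of `P` (and no other letter) occurs on
a dense subset of `D`. -/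
def IsEtaFamilyOn {S ι : Type} (r : ι → ι → Prop) (lab : ι → S) (D : Set ι)
    (P : Set S) : Prop :=
  D.Nonempty ∧ D.Countable ∧
  (∀ x ∈ D, ∃ y ∈ D, r x y) ∧ (∀ x ∈ D, ∃ y ∈ D, r y x) ∧
  (∀ x ∈ D, lab x ∈ P) ∧
  (∀ a ∈ P, ∀ x ∈ D, ∀ y ∈ D, r x y → ∃ z ∈ D, r x z ∧ r z y ∧ lab z = a) ∧
  (∀ a ∈ P, ∃ x ∈ D, lab x = a)
/-- The extended partial map `π₀^`, as a relation: the word given by the positions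
`ι` (ordered by the strict ordering `r`) with labels `lab` is in the domain of
`π₀^` with value `v`.  The clauses correspond to finite nonempty words
`a₁ ⋯ aₙ`, words `a b^ω`, words `b^{ω*} a`, and words `a P^η b` where either or
both of the end letters `a`, `b` may be absent. -/
def Pi0HatRel {S : Type} (mul : S → S → S) (tau taustar : S → S) (kappa : Set S → S)
    {ι : Type} (r : ι → ι → Prop) (lab : ι → S) (v : S) : Prop :=
  (∃ (n : ℕ) (g : Fin (n + 1) → ι),
      (∀ i j : Fin (n + 1), i < j → r (g i) (g j)) ∧ (∀ x : ι, ∃ i, g i = x) ∧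
      v = List.foldl mul (lab (g 0)) (List.ofFn fun i : Fin n => lab (g i.succ))) ∨
  (∃ g : ℕ → ι, (∀ m n : ℕ, m < n → r (g m) (g n)) ∧ (∀ x : ι, ∃ n, g n = x) ∧
      ∃ b : S, (∀ n : ℕ, 0 < n → lab (g n) = b) ∧ v = mul (lab (g 0)) (tau b)) ∨
  (∃ g : ℕ → ι, (∀ m n : ℕ, m < n → r (g n) (g m)) ∧ (∀ x : ι, ∃ n, g n = x) ∧
      ∃ b : S, (∀ n : ℕ, 0 < n → lab (g n) = b) ∧ v = mul (taustar b) (lab (g 0))) ∨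
  (∃ P : Set S, P.Nonempty ∧
    ((IsEtaFamilyOn r lab Set.univ P ∧ v = kappa P) ∨
     (∃ x₀ : ι, (∀ y : ι, y ≠ x₀ → r x₀ y) ∧ IsEtaFamilyOn r lab {y | y ≠ x₀} P ∧
        v = mul (lab x₀) (kappa P)) ∨
     (∃ x₁ : ι, (∀ y : ι, y ≠ x₁ → r y x₁) ∧ IsEtaFamilyOn r lab {y | y ≠ x₁} P ∧
        v = mul (kappa P) (lab x₁)) ∨
     (∃ x₀ x₁ : ι, x₀ ≠ x₁ ∧ (∀ y : ι, y ≠ x₀ → r x₀ y) ∧ (∀ y : ι, y ≠ x₁ → r y x₁) ∧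
        IsEtaFamilyOn r lab {y | y ≠ x₀ ∧ y ≠ x₁} P ∧
        v = mul (mul (lab x₀) (kappa P)) (lab x₁))))
/-- `(T, γ)` is an evaluation tree with respect to the extended map `π₀^` over
the word `u` restricted to the root `R`. -/
structure IsEvalTreeHat {S α : Type} [LinearOrder α] (mul : S → S → S)
    (tau taustar : S → S) (kappa : Set S → S) (u : α → S)
    (R : Set α) (T : Set (Set α)) (γ : Set α → S) : Prop where
  tree : IsCondTreeOn R T
  leaf_spec : ∀ I : Set α, IsLeafOf T I → ∃ x : α, I = {x} ∧ γ I = u x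
  node_spec : ∀ I ∈ T, ¬ IsLeafOf T I →
    Pi0HatRel mul tau taustar kappa
      (fun J K : {J : Set α // IsChildOf T J I} => SetLT J.1 K.1)
      (fun J : {J : Set α // IsChildOf T J I} => γ J.1) (γ I)


/-!
The value `π₀^(u)` extends to a value `ν I` on every convex factor `I` of `u`, given by an
explicit formula for each shape of `u`: the finite product for finite words; for `a b^ω` the
finite product on finite factors and `a·b^τ` or `b^τ` on final segments (dually for `b^{ω*} a`);
for `a P^η b` the letter on singletons and `κP` flanked by the letters at the end points of `I`
otherwise. The shape of `u` restricts how a factor can be cut into convex blocks (an `ω`-word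
has no descending chains, a finite word no chains at all, and in a dense word two consecutive
blocks never both have an end point at their junction), and for the cuts that remain the
⊕-algebra axioms show that `π₀^` of the word of block values is `ν I`. Induction along the
condensation tree, whose chains are finite, then gives `γ I = ν I` at every node, in particular
at the root.
-/
open Set

variable {S α : Type}

/-! ### Consequences of the ⊕-algebra axioms -/

section Algebra

variable [Semigroup S] {tau taustar : S → S} {kappa : Set S → S}

/-- The shapes allowed for the elements of `P''` in axiom (A4). -/
def kappaForms (kappa : Set S → S) (P : Set S) : Set S :=
  {x | x = kappa P ∨ (∃ a ∈ P, x = a * kappa P) ∨ (∃ b ∈ P, x = kappa P * b) ∨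
    ∃ a ∈ P, ∃ b ∈ P, x = a * kappa P * b}

namespace PlusAlgAxioms

variable (hax : PlusAlgAxioms (· * ·) tau taustar kappa)
include hax

theorem tau_sPow (b : S) (k : ℕ) : tau (sPow (· * ·) b k) = tau b := hax.2.2.1 b k

theorem taustar_sPow (b : S) (k : ℕ) : taustar (sPow (· * ·) b k) = taustar b :=
  hax.2.2.2.2.1 b k

theorem tau_mul (a b : S) : tau (a * b) = a * tau (b * a) := hax.2.1 a b

theorem taustar_mul (a b : S) : taustar (b * a) = taustar (a * b) * a := hax.2.2.2.1 a b

theorem mul_tau_self (b : S) : b * tau b = tau b := by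
  have h := hax.tau_mul b b
  rwa [show b * b = sPow (· * ·) b 1 from rfl, hax.tau_sPow, eq_comm] at h

theorem taustar_mul_self (b : S) : taustar b * b = taustar b := by
  have h := hax.taustar_mul b b
  rwa [show b * b = sPow (· * ·) b 1 from rfl, hax.taustar_sPow, eq_comm] at h

theorem sPow_mul_tau (b : S) (k : ℕ) : sPow (· * ·) b k * tau b = tau b := by
  induction k with
  | zero => exact hax.mul_tau_self b
  | succ k ih => exact (mul_assoc b _ _).trans ((congrArg _ ih).trans (hax.mul_tau_self b))

theorem taustar_mul_sPow (b : S) (k : ℕ) : taustar b * sPow (· * ·) b k = taustar b := by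
  induction k with
  | zero => exact hax.taustar_mul_self b
  | succ k ih =>
    exact (mul_assoc _ b _).symm.trans ((congrArg (· * _) (hax.taustar_mul_self b)).trans ih)

variable {P : Set S} (hP : P.Nonempty)
include hP

theorem kappa_laws {c : S} (hc : c ∈ P) :
    kappa P * kappa P = kappa P ∧ kappa P * (c * kappa P) = kappa P ∧
      tau (kappa P) = kappa P ∧ tau (kappa P * c) = kappa P ∧
      taustar (kappa P) = kappa P ∧ taustar (c * kappa P) = kappa P := by
  obtain ⟨h1, h2, h3, h4, h5, h6, -⟩ := hax.2.2.2.2.2 P hP c hc ∅ (empty_subset P) {kappa P}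
    (singleton_nonempty _) (singleton_subset_iff.2 (Or.inl rfl))
  exact ⟨h1.symm, h2.symm, h3.symm, h4.symm, h5.symm, h6.symm⟩

theorem kappa_mul_self : kappa P * kappa P = kappa P :=
  (hax.kappa_laws hP hP.some_mem).1

theorem kappa_mul_mul_kappa {c : S} (hc : c ∈ P) : kappa P * (c * kappa P) = kappa P :=
  (hax.kappa_laws hP hc).2.1

theorem tau_kappa : tau (kappa P) = kappa P :=
  (hax.kappa_laws hP hP.some_mem).2.2.1

theorem tau_kappa_mul {c : S} (hc : c ∈ P) : tau (kappa P * c) = kappa P :=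
  (hax.kappa_laws hP hc).2.2.2.1

theorem taustar_kappa : taustar (kappa P) = kappa P :=
  (hax.kappa_laws hP hP.some_mem).2.2.2.2.1

theorem taustar_mul_kappa {c : S} (hc : c ∈ P) : taustar (c * kappa P) = kappa P :=
  (hax.kappa_laws hP hc).2.2.2.2.2

theorem tau_mul_kappa {c : S} (hc : c ∈ P) : tau (c * kappa P) = c * kappa P := by
  rw [hax.tau_mul c (kappa P), hax.tau_kappa_mul hP hc]

theorem taustar_kappa_mul {c : S} (hc : c ∈ P) : taustar (kappa P * c) = kappa P * c := by
  rw [hax.taustar_mul c (kappa P), hax.taustar_mul_kappa hP hc]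

theorem kappa_union_eq {P' P'' : Set S} (hP' : P' ⊆ P) (hP'' : P''.Nonempty)
    (hforms : P'' ⊆ kappaForms kappa P) : kappa (P' ∪ P'') = kappa P :=
  (hax.2.2.2.2.2 P hP _ hP.some_mem P' hP' P'' hP'' hforms).2.2.2.2.2.2.symm

end PlusAlgAxioms

end Algebra

/-! ### Condensation trees over a linear order -/

section Tree

variable [LinearOrder α]

theorem setLT_irrefl {I : Set α} (hI : I.Nonempty) : ¬ SetLT I I :=
  fun h => lt_irrefl _ (h _ hI.some_mem _ hI.some_mem)

theorem SetLT.trans {I J K : Set α} (hJ : J.Nonempty) (h₁ : SetLT I J) (h₂ : SetLT J K) :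
    SetLT I K :=
  fun x hx z hz => (h₁ x hx _ hJ.some_mem).trans (h₂ _ hJ.some_mem z hz)

abbrev Child (T : Set (Set α)) (I : Set α) := {J : Set α // IsChildOf T J I}

namespace IsCondTreeOn

variable {T : Set (Set α)} (hT : IsCondTreeOn (univ : Set α) T)
include hT

theorem ordConnected {I : Set α} (hI : I ∈ T) : I.OrdConnected := by
  refine ⟨fun x hx y hy z hz => ?_⟩
  rcases hz.1.eq_or_lt with rfl | hxz
  · exact hx
  rcases hz.2.eq_or_lt with rfl | hzy
  · exact hy
  exact hT.mem_convex I hI x hx y hy z trivial hxz hzy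

theorem induction {p : Set α → Prop} (h : ∀ I ∈ T, (∀ J ∈ T, J ⊂ I → p J) → p I) :
    ∀ I ∈ T, p I := by
  have hwf : WellFounded (fun J I : T => J.1 ⊂ I.1) := by
    refine wellFounded_iff_isEmpty_descending_chain.2 ⟨fun ⟨f, hf⟩ => ?_⟩
    have hanti : StrictAnti fun n => (f n).1 := strictAnti_nat_of_succ_lt hf
    exact infinite_range_of_injective hanti.injective <| hT.chains_finite _
      (range_subset_iff.2 fun n => (f n).2) hanti.antitone.isChain_range
  intro I hI
  exact hwf.induction (C := fun J => p J.1) ⟨I, hI⟩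
    fun J ih => h J J.2 fun K hK hKJ => ih ⟨K, hK⟩ hKJ

theorem exists_child_superset {I J : Set α} (hI : I ∈ T) (hJ : J ∈ T) (hJI : J ⊂ I) :
    ∃ C, IsChildOf T C I ∧ J ⊆ C := by
  set Ch : Set (Set α) := {K | K ∈ T ∧ J ⊆ K ∧ K ⊂ I}
  have hchain : IsChain (· ⊆ ·) Ch := by
    rintro K ⟨hK, hJK, -⟩ K' ⟨hK', hJK', -⟩ -
    rcases hT.comparable_or_disjoint K hK K' hK' with h | h | h
    · exact Or.inl h
    · exact Or.inr h
    · obtain ⟨x, hx⟩ := hT.mem_nonempty J hJ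
      exact absurd (h ▸ ⟨hJK hx, hJK' hx⟩ : x ∈ (∅ : Set α)) (notMem_empty x)
  obtain ⟨M, hM, hmax⟩ := (hT.chains_finite Ch (fun K hK => hK.1) hchain).exists_maximalFor id
    Ch ⟨J, hJ, subset_rfl, hJI⟩
  refine ⟨M, ⟨hM.1, hM.2.2, fun K hK hMK => ?_⟩, hM.2.1⟩
  rcases hT.comparable_or_disjoint K hK I hI with h | h | h
  · by_contra hIK
    exact hMK.not_subset (hmax ⟨hK, hM.2.1.trans hMK.subset, h.ssubset_of_not_subset hIK⟩
      hMK.subset)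
  · exact h
  · obtain ⟨x, hx⟩ := hT.mem_nonempty M hM.1
    exact absurd (h ▸ ⟨hMK.subset hx, hM.2.2.subset hx⟩ : x ∈ (∅ : Set α)) (notMem_empty x)

variable {I : Set α}

theorem child_nonempty (C : Child T I) : C.1.Nonempty := hT.mem_nonempty _ C.2.1

theorem exists_child_mem (hI : I ∈ T) (hnl : ¬ IsLeafOf T I) {x : α} (hx : x ∈ I) :
    ∃ C : Child T I, x ∈ C.1 := by
  obtain ⟨J, hJ, hJI⟩ : ∃ J ∈ T, J ⊂ I := by
    by_contra! h
    exact hnl ⟨hI, fun J hJ hJI => by_contra fun hne => h J hJ (hJI.ssubset_of_ne hne)⟩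
  have hcover : ⋃₀ {J | J ∈ T ∧ J ⊂ I} = I := (hT.children_union I hI).resolve_right fun h =>
    (hT.mem_nonempty J hJ).ne_empty (subset_empty_iff.1 (h ▸ subset_sUnion_of_mem ⟨hJ, hJI⟩))
  obtain ⟨K, ⟨hK, hKI⟩, hxK⟩ := hcover.symm ▸ hx
  obtain ⟨C, hC, hKC⟩ := hT.exists_child_superset hI hK hKI
  exact ⟨⟨C, hC⟩, hKC hxK⟩

variable (hI : I ∈ T) (hnl : ¬ IsLeafOf T I)
include hI hnl

theorem isLeast_iff_of_first (A : Child T I) (hA : ∀ C : Child T I, C ≠ A → SetLT A.1 C.1)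
    (m : α) : IsLeast I m ↔ IsLeast A.1 m := by
  refine ⟨fun hm => ?_, fun hm => ⟨A.2.2.1.subset hm.1, fun y hy => ?_⟩⟩
  · obtain ⟨C, hmC⟩ := hT.exists_child_mem hI hnl hm.1
    obtain rfl | hne := eq_or_ne C A
    · exact ⟨hmC, fun y hy => hm.2 (C.2.2.1.subset hy)⟩
    · obtain ⟨x, hx⟩ := hT.child_nonempty A
      exact absurd (hA C hne x hx m hmC) (hm.2 (A.2.2.1.subset hx)).not_gt
  · obtain ⟨C, hyC⟩ := hT.exists_child_mem hI hnl hy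
    obtain rfl | hne := eq_or_ne C A
    exacts [hm.2 hyC, (hA C hne m hm.1 y hyC).le]

theorem isGreatest_iff_of_last (B : Child T I) (hB : ∀ C : Child T I, C ≠ B → SetLT C.1 B.1)
    (M : α) : IsGreatest I M ↔ IsGreatest B.1 M := by
  refine ⟨fun hM => ?_, fun hM => ⟨B.2.2.1.subset hM.1, fun y hy => ?_⟩⟩
  · obtain ⟨C, hMC⟩ := hT.exists_child_mem hI hnl hM.1
    obtain rfl | hne := eq_or_ne C B
    · exact ⟨hMC, fun y hy => hM.2 (C.2.2.1.subset hy)⟩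
    · obtain ⟨x, hx⟩ := hT.child_nonempty B
      exact absurd (hB C hne M hMC x hx) (hM.2 (B.2.2.1.subset hx)).not_gt
  · obtain ⟨C, hyC⟩ := hT.exists_child_mem hI hnl hy
    obtain rfl | hne := eq_or_ne C B
    exacts [hM.2 hyC, (hB C hne y hyC M hM.1).le]

theorem not_isLeast_of_forall_exists_setLT (h : ∀ C : Child T I, ∃ C' : Child T I, SetLT C'.1 C.1)
    (m : α) : ¬ IsLeast I m := fun hm => by
  obtain ⟨C, hmC⟩ := hT.exists_child_mem hI hnl hm.1
  obtain ⟨C', hC'⟩ := h C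
  obtain ⟨x, hx⟩ := hT.child_nonempty C'
  exact (hC' x hx m hmC).not_ge (hm.2 (C'.2.2.1.subset hx))

theorem not_isGreatest_of_forall_exists_setLT
    (h : ∀ C : Child T I, ∃ C' : Child T I, SetLT C.1 C'.1) (M : α) : ¬ IsGreatest I M :=
  fun hM => by
  obtain ⟨C, hMC⟩ := hT.exists_child_mem hI hnl hM.1
  obtain ⟨C', hC'⟩ := h C
  obtain ⟨x, hx⟩ := hT.child_nonempty C'
  exact (hC' M hMC x hx).not_ge (hM.2 (C'.2.2.1.subset hx))

theorem ordConnected_union_of_adjacent (C C' : Child T I) (hlt : SetLT C.1 C'.1)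
    (hmid : ∀ K : Child T I, K ≠ C → K ≠ C' → SetLT K.1 C.1 ∨ SetLT C'.1 K.1) :
    (C.1 ∪ C'.1).OrdConnected := by
  refine ⟨fun x hx y hy z hz => ?_⟩
  obtain ⟨K, hzK⟩ := hT.exists_child_mem hI hnl ((hT.ordConnected hI).out
    (union_subset C.2.2.1.subset C'.2.2.1.subset hx)
    (union_subset C.2.2.1.subset C'.2.2.1.subset hy) hz)
  by_cases hKC : K = C
  · exact Or.inl (hKC ▸ hzK)
  by_cases hKC' : K = C'
  · exact Or.inr (hKC' ▸ hzK)
  rcases hmid K hKC hKC' with h | h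
  · have hKC' : SetLT K.1 C'.1 := h.trans (hT.child_nonempty C) hlt
    rcases hx with hx | hx
    exacts [absurd hz.1 (h z hzK x hx).not_ge, absurd hz.1 (hKC' z hzK x hx).not_ge]
  · have hCK : SetLT C.1 K.1 := hlt.trans (hT.child_nonempty C') h
    rcases hy with hy | hy
    exacts [absurd hz.2 (hCK y hy z hzK).not_ge, absurd hz.2 (h y hy z hzK).not_ge]

end IsCondTreeOn

end Tree

section Compatible

variable [LinearOrder α] [Mul S] {tau taustar : S → S} {kappa : Set S → S}

def IsPi0HatCompatible (tau taustar : S → S) (kappa : Set S → S) (T : Set (Set α))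
    (ν : Set α → S) : Prop :=
  ∀ I ∈ T, ¬ IsLeafOf T I → ∀ v, Pi0HatRel (· * ·) tau taustar kappa
    (fun J K : Child T I => SetLT J.1 K.1) (fun J => ν J.1) v → v = ν I

theorem IsEvalTreeHat.eq_of_compatible {u : α → S} {T : Set (Set α)} {γ ν : Set α → S}
    (h : IsEvalTreeHat (· * ·) tau taustar kappa u univ T γ) (hsing : ∀ x, ν {x} = u x)
    (hν : IsPi0HatCompatible tau taustar kappa T ν) : ∀ I ∈ T, γ I = ν I := by
  refine h.tree.induction fun I hI ih => ?_
  by_cases hl : IsLeafOf T I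
  · obtain ⟨x, rfl, hx⟩ := h.leaf_spec I hl
    rw [hx, hsing]
  · have hγν : (fun J : Child T I => γ J.1) = fun J => ν J.1 :=
      funext fun J => ih J J.2.1 J.2.2.1
    exact hν I hI hl _ (hγν ▸ h.node_spec I hI hl)

def IsConcatMul (ν : Set α → S) : Prop :=
  ∀ A B : Set α, A.Nonempty → B.Nonempty → SetLT A B → (A ∪ B).OrdConnected →
    ν A * ν B = ν (A ∪ B)

theorem IsConcatMul.foldl_eq_iUnion {ν : Set α → S} (hν : IsConcatMul ν) :
    ∀ {n : ℕ} (s : Fin (n + 1) → Set α), (∀ i, (s i).Nonempty) →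
      (∀ i j, i < j → SetLT (s i) (s j)) → (⋃ i, s i).OrdConnected →
      List.foldl (· * ·) (ν (s 0)) (List.ofFn fun i : Fin n => ν (s i.succ)) = ν (⋃ i, s i)
  | 0, s, _, _, _ => by
    have hs : (⋃ i, s i) = s 0 := by ext; simp [Fin.exists_fin_one]
    simp [hs]
  | n + 1, s, hne, hlt, hconn => by
    have hprefix : SetLT (⋃ i, s (Fin.castSucc i)) (s (Fin.last (n + 1))) := by
      simp only [SetLT, mem_iUnion]
      rintro x ⟨i, hx⟩ y hy
      exact hlt _ _ (Fin.castSucc_lt_last i) x hx y hy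
    have hunion := iUnion_fin_add_one_eq_iUnion_castSucc s
    have hconn' : (⋃ i, s (Fin.castSucc i)).OrdConnected := by
      refine ⟨fun x hx y hy z hz => ?_⟩
      have hz' : z ∈ (⋃ i, s (Fin.castSucc i)) ∪ s (Fin.last (n + 1)) := by
        rw [← Function.comp_def, ← hunion]
        exact hconn.out (hunion ▸ Or.inl hx) (hunion ▸ Or.inl hy) hz
      exact hz'.resolve_right fun hzl => (hprefix y hy z hzl).not_ge hz.2
    have ih := hν.foldl_eq_iUnion (fun i => s (Fin.castSucc i)) (fun i => hne _)
      (fun i j hij => hlt _ _ (Fin.castSucc_lt_castSucc_iff.2 hij)) hconn'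
    rw [List.ofFn_succ', List.concat_eq_append, List.foldl_append]
    simp only [Fin.succ_castSucc]
    rw [← Fin.castSucc_zero, ih, Fin.succ_last,
      List.foldl_cons, List.foldl_nil, hunion, Function.comp_def]
    obtain ⟨x, hx⟩ := hne 0
    exact hν _ _ ⟨x, mem_iUnion.2 ⟨0, hx⟩⟩ (hne _) hprefix
      (by rw [← Function.comp_def, ← hunion]; exact hconn)

theorem IsCondTreeOn.foldl_children_eq {T : Set (Set α)} (hT : IsCondTreeOn (univ : Set α) T)
    {I : Set α} (hI : I ∈ T) (hnl : ¬ IsLeafOf T I) {ν : Set α → S} (hν : IsConcatMul ν)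
    {n : ℕ} (g : Fin (n + 1) → Child T I) (hlt : ∀ i j, i < j → SetLT (g i).1 (g j).1)
    (hsurj : ∀ C, ∃ i, g i = C) :
    List.foldl (· * ·) (ν (g 0).1) (List.ofFn fun i : Fin n => ν (g i.succ).1) = ν I := by
  have hI' : (⋃ i, (g i).1) = I := by
    refine (iUnion_subset fun i => (g i).2.2.1.subset).antisymm fun x hx => ?_
    obtain ⟨C, hxC⟩ := hT.exists_child_mem hI hnl hx
    obtain ⟨i, rfl⟩ := hsurj C
    exact mem_iUnion.2 ⟨i, hxC⟩
  have h := hν.foldl_eq_iUnion (fun i => (g i).1) (fun i => hT.child_nonempty _) hlt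
    (hI'.symm ▸ hT.ordConnected hI)
  rwa [hI'] at h

end Compatible

theorem exists_seq_of_forall_exists {ι : Type} {r : ι → ι → Prop} {D : Set ι} (hD : D.Nonempty)
    (h : ∀ x ∈ D, ∃ y ∈ D, r x y) : ∃ f : ℕ → ι, ∀ n, r (f n) (f (n + 1)) := by
  choose F hFD hF using h
  let f : ℕ → D := fun n => Nat.rec ⟨_, hD.some_mem⟩ (fun _ x => ⟨F x.1 x.2, hFD x.1 x.2⟩) n
  exact ⟨fun n => (f n).1, fun n => hF _ (f n).2⟩

namespace IsEtaFamilyOn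

variable {ι : Type} {r : ι → ι → Prop} {lab : ι → S} {D : Set ι} {P : Set S}
  (h : IsEtaFamilyOn r lab D P)
include h

theorem exists_seq_succ : ∃ f : ℕ → ι, ∀ n, r (f n) (f (n + 1)) :=
  exists_seq_of_forall_exists h.1 h.2.2.1

theorem exists_seq_pred : ∃ f : ℕ → ι, ∀ n, r (f (n + 1)) (f n) :=
  exists_seq_of_forall_exists (r := fun x y => r y x) h.1 h.2.2.2.1

end IsEtaFamilyOn

section Chains

variable [LinearOrder α] {f : ℕ → Set α}

theorem not_forall_setLT_succ [WellFoundedGT α] (hne : ∀ n, (f n).Nonempty) :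
    ¬ ∀ n, SetLT (f n) (f (n + 1)) := fun h =>
  not_strictMono_of_wellFoundedGT (fun n => (hne n).some) <| strictMono_nat_of_lt_succ fun n =>
    h n _ (hne n).some_mem _ (hne (n + 1)).some_mem

theorem not_forall_setLT_pred [WellFoundedLT α] (hne : ∀ n, (f n).Nonempty) :
    ¬ ∀ n, SetLT (f (n + 1)) (f n) := fun h =>
  not_strictAnti_of_wellFoundedLT (fun n => (hne n).some) <| strictAnti_nat_of_succ_lt fun n =>
    h n _ (hne (n + 1)).some_mem _ (hne n).some_mem

end Chains

/-! ### Finite words -/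

section FiniteProduct

variable [LinearOrder α]

/-- `[]` for an infinite set. -/
noncomputable def sortedElems (I : Set α) : List α := by
  classical exact if h : I.Finite then h.toFinset.sort (· ≤ ·) else []

theorem mem_sortedElems {I : Set α} (hI : I.Finite) {x : α} : x ∈ sortedElems I ↔ x ∈ I := by
  classical
  simp [sortedElems, hI]

theorem sortedElems_pairwise_lt (I : Set α) : (sortedElems I).Pairwise (· < ·) := by
  classical
  unfold sortedElems
  split
  · exact ((Finset.pairwise_sort _ _).imp₂ (fun _ _ => lt_of_le_of_ne) (Finset.sort_nodup _ _))
  · exact List.Pairwise.nil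

theorem sortedElems_singleton (x : α) : sortedElems ({x} : Set α) = [x] := by
  classical
  simp [sortedElems]

theorem sortedElems_union {A B : Set α} (hA : A.Finite) (hB : B.Finite) (hlt : SetLT A B) :
    sortedElems (A ∪ B) = sortedElems A ++ sortedElems B := by
  classical
  have hsorted : (sortedElems A ++ sortedElems B).Pairwise (· < ·) :=
    List.pairwise_append.2 ⟨sortedElems_pairwise_lt A, sortedElems_pairwise_lt B,
      fun x hx y hy => hlt x ((mem_sortedElems hA).1 hx) y ((mem_sortedElems hB).1 hy)⟩
  refine List.Perm.eq_of_pairwise' (sortedElems_pairwise_lt _) hsorted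
    (List.perm_of_nodup_nodup_toFinset_eq (sortedElems_pairwise_lt _).nodup hsorted.nodup ?_)
  ext x
  simp [mem_sortedElems hA, mem_sortedElems hB, mem_sortedElems (hA.union hB)]

variable [Semigroup S]

theorem foldl_mul_eq_sPow {b : S} :
    ∀ {l : List S}, (∀ y ∈ l, y = b) → l.foldl (· * ·) b = sPow (· * ·) b l.length
  | [], _ => rfl
  | y :: t, h => by
    rw [List.foldl_cons, h y List.mem_cons_self, List.foldl_assoc,
      foldl_mul_eq_sPow fun z hz => h z (List.mem_cons_of_mem y hz)]
    rfl

variable [Nonempty α]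

noncomputable def finProd (u : α → S) (I : Set α) : S :=
  match (sortedElems I).map u with
  | [] => u (Classical.arbitrary α)
  | x :: t => t.foldl (· * ·) x

variable {u : α → S}

theorem finProd_singleton (x : α) : finProd u {x} = u x := by
  simp [finProd, sortedElems_singleton]

theorem finProd_union {A B : Set α} (hA : A.Finite) (hB : B.Finite) (hAne : A.Nonempty)
    (hBne : B.Nonempty) (hlt : SetLT A B) : finProd u (A ∪ B) = finProd u A * finProd u B := by
  obtain ⟨x, t, hxt⟩ := List.exists_cons_of_ne_nil
    (List.ne_nil_of_mem ((mem_sortedElems hA).2 hAne.some_mem))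
  obtain ⟨y, t', hyt⟩ := List.exists_cons_of_ne_nil
    (List.ne_nil_of_mem ((mem_sortedElems hB).2 hBne.some_mem))
  simp only [finProd, sortedElems_union hA hB hlt, hxt, hyt, List.cons_append, List.map_cons,
    List.map_append, List.foldl_append, List.foldl_cons]
  exact List.foldl_assoc

theorem finProd_eq_sPow {A : Set α} (hA : A.Finite) (hAne : A.Nonempty) {b : S}
    (hb : ∀ x ∈ A, u x = b) : ∃ k, finProd u A = sPow (· * ·) b k := by
  obtain ⟨x, t, hxt⟩ := List.exists_cons_of_ne_nil
    (List.ne_nil_of_mem ((mem_sortedElems hA).2 hAne.some_mem))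
  have hmem : ∀ z ∈ x :: t, z ∈ A := fun z hz => (mem_sortedElems hA).1 (hxt ▸ hz)
  refine ⟨t.length, ?_⟩
  simp only [finProd, hxt, List.map_cons, hb x (hmem x List.mem_cons_self)]
  rw [foldl_mul_eq_sPow, List.length_map]
  simp only [List.mem_map]
  rintro _ ⟨z, hz, rfl⟩
  exact hb z (hmem z (List.mem_cons_of_mem x hz))

theorem isConcatMul_finProd [Finite α] : IsConcatMul (finProd (S := S) u) :=
  fun A B hA hB hlt _ => (finProd_union (toFinite A) (toFinite B) hA hB hlt).symm

end FiniteProduct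

section FiniteWord

variable [LinearOrder α] [Nonempty α] [Semigroup S] {tau taustar : S → S}
  {kappa : Set S → S} {u : α → S} {T : Set (Set α)}

theorem IsCondTreeOn.isPi0HatCompatible_finProd [Finite α]
    (hT : IsCondTreeOn (univ : Set α) T) :
    IsPi0HatCompatible tau taustar kappa T (finProd u) := by
  intro I hI hnl v hrel
  have hne : ∀ C : Child T I, C.1.Nonempty := hT.child_nonempty
  rcases hrel with ⟨n, g, hlt, hsurj, rfl⟩ | ⟨g, hlt, -⟩ | ⟨g, hlt, -⟩ | ⟨P, -, hη⟩
  · exact hT.foldl_children_eq hI hnl isConcatMul_finProd g hlt hsurj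
  · exact absurd (fun n => hlt n (n + 1) n.lt_succ_self) (not_forall_setLT_succ fun n => hne (g n))
  · exact absurd (fun n => hlt n (n + 1) n.lt_succ_self) (not_forall_setLT_pred fun n => hne (g n))
  · exfalso
    rcases hη with ⟨hfam, -⟩ | ⟨_, -, hfam, -⟩ | ⟨_, -, hfam, -⟩ | ⟨_, _, -, -, -, hfam, -⟩ <;>
    exact hfam.exists_seq_succ.elim fun f hf => not_forall_setLT_succ (fun n => hne (f n)) hf

end FiniteWord

/-! ### Words `a b^ω` -/

section OmegaOrder

variable [LinearOrder α] {g : ℕ → α} (hg : StrictMono g) (hgs : Function.Surjective g)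
include hg hgs

theorem wellFoundedLT_of_strictMono_surjective : WellFoundedLT α :=
  (hg.orderIsoOfSurjective g hgs).symm.strictMono.wellFoundedLT

theorem apply_zero_le_of_strictMono (x : α) : g 0 ≤ x := by
  obtain ⟨n, rfl⟩ := hgs x
  exact hg.monotone n.zero_le

theorem finite_of_forall_lt {A : Set α} {y : α} (h : ∀ x ∈ A, x < y) : A.Finite := by
  obtain ⟨n, rfl⟩ := hgs y
  refine ((finite_Iio n).image g).subset fun x hx => ?_
  obtain ⟨m, rfl⟩ := hgs x
  exact ⟨m, hg.lt_iff_lt.1 (h _ hx), rfl⟩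

end OmegaOrder

section OmegaWord

open scoped Classical

variable [LinearOrder α] [Nonempty α] [Semigroup S] {tau taustar : S → S}
  {kappa : Set S → S} {u : α → S} {T : Set (Set α)} {g : ℕ → α} {b : S}

/-- The value of `π₀^` on the factor over `I` of the word `a b^ω` enumerated by `g`. -/
noncomputable def omegaVal (tau : S → S) (u : α → S) (g : ℕ → α) (b : S) (I : Set α) : S :=
  if I.Finite then finProd u I else if g 0 ∈ I then u (g 0) * tau b else tau b

theorem omegaVal_singleton (x : α) : omegaVal tau u g b {x} = u x := by
  simp [omegaVal, finProd_singleton]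

variable (hg : StrictMono g) (hgs : Function.Surjective g)
  (hax : PlusAlgAxioms (· * ·) tau taustar kappa) (hb : ∀ x, x ≠ g 0 → u x = b)
include hg hgs hax hb

theorem finProd_mul_tau {A : Set α} (hA : A.Finite) (hAne : A.Nonempty) :
    finProd u A * tau b = if g 0 ∈ A then u (g 0) * tau b else tau b := by
  by_cases h0 : g 0 ∈ A
  · rw [if_pos h0]
    rcases (A \ {g 0}).eq_empty_or_nonempty with hA' | hA'
    · rw [(sdiff_eq_empty.1 hA').antisymm (singleton_subset_iff.2 h0), finProd_singleton]
    · have hlt : SetLT {g 0} (A \ {g 0}) := fun x hx y hy => by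
        rw [mem_singleton_iff.1 hx]
        exact (apply_zero_le_of_strictMono hg hgs y).lt_of_ne (Ne.symm hy.2)
      obtain ⟨k, hk⟩ := finProd_eq_sPow (hA.sdiff) hA' fun x hx => hb x hx.2
      rw [← union_sdiff_cancel (singleton_subset_iff.2 h0), finProd_union (finite_singleton _)
        hA.sdiff (singleton_nonempty _) hA' hlt, finProd_singleton, hk, mul_assoc,
        hax.sPow_mul_tau]
  · obtain ⟨k, hk⟩ := finProd_eq_sPow hA hAne fun x hx => hb x (ne_of_mem_of_not_mem hx h0)
    rw [if_neg h0, hk, hax.sPow_mul_tau]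

theorem isConcatMul_omegaVal : IsConcatMul (omegaVal tau u g b) := by
  intro A B hA hB hlt _
  have hAfin : A.Finite := finite_of_forall_lt hg hgs fun x hx => hlt x hx _ hB.some_mem
  have h0B : g 0 ∉ B := fun h0 =>
    (hlt _ hA.some_mem _ h0).not_ge (apply_zero_le_of_strictMono hg hgs _)
  by_cases hBfin : B.Finite
  · simp only [omegaVal, hAfin, hBfin, hAfin.union hBfin, if_true]
    exact (finProd_union hAfin hBfin hA hB hlt).symm
  · have hABfin : ¬ (A ∪ B).Finite := fun h => hBfin (h.subset subset_union_right)
    simp only [omegaVal, hAfin, hBfin, hABfin, h0B, if_true, if_false, mem_union, or_false]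
    exact finProd_mul_tau hg hgs hax hb hAfin hA

theorem IsCondTreeOn.omegaVal_eq_of_omega_children (hT : IsCondTreeOn (univ : Set α) T)
    {I : Set α} (hI : I ∈ T) (hnl : ¬ IsLeafOf T I) (gc : ℕ → Child T I)
    (hlt : ∀ m n, m < n → SetLT (gc m).1 (gc n).1) (hsurj : ∀ C, ∃ n, gc n = C) {b' : S}
    (hb' : ∀ n, 0 < n → omegaVal tau u g b (gc n).1 = b') :
    omegaVal tau u g b (gc 0).1 * tau b' = omegaVal tau u g b I := by
  have hne : ∀ C : Child T I, C.1.Nonempty := hT.child_nonempty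
  have hnext : ∀ n, SetLT (gc n).1 (gc (n + 1)).1 := fun n => hlt n (n + 1) n.lt_succ_self
  have hfin : ∀ n, (gc n).1.Finite := fun n =>
    finite_of_forall_lt hg hgs fun x hx => hnext n x hx _ (hne _).some_mem
  have hg0 : ∀ n, 0 < n → g 0 ∉ (gc n).1 := fun n hn h0 =>
    (hlt 0 n hn _ (hne _).some_mem _ h0).not_ge (apply_zero_le_of_strictMono hg hgs _)
  have hIinf : I.Infinite := infinite_of_injective_forall_mem
    (strictMono_nat_of_lt_succ fun n => hnext n _ (hne _).some_mem _ (hne _).some_mem).injective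
    fun n => (gc n).2.2.1.subset (hne (gc n)).some_mem
  have htau : tau b' = tau b := by
    obtain ⟨k, hk⟩ := finProd_eq_sPow (hfin 1) (hne _) fun x hx =>
      hb x fun h => hg0 1 one_pos (h ▸ hx)
    rw [← hb' 1 one_pos, omegaVal, if_pos (hfin 1), hk, hax.tau_sPow]
  have hmem : g 0 ∈ I ↔ g 0 ∈ (gc 0).1 := by
    refine ⟨fun h => ?_, fun h => (gc 0).2.2.1.subset h⟩
    obtain ⟨C, hC⟩ := hT.exists_child_mem hI hnl h
    obtain ⟨m, rfl⟩ := hsurj C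
    rcases m.eq_zero_or_pos with rfl | hm
    exacts [hC, absurd hC (hg0 m hm)]
  rw [htau, omegaVal, omegaVal, if_pos (hfin 0), if_neg hIinf,
    finProd_mul_tau hg hgs hax hb (hfin 0) (hne _), hmem]

theorem IsCondTreeOn.isPi0HatCompatible_omegaVal (hT : IsCondTreeOn (univ : Set α) T) :
    IsPi0HatCompatible tau taustar kappa T (omegaVal tau u g b) := by
  have := wellFoundedLT_of_strictMono_surjective hg hgs
  intro I hI hnl v hrel
  have hne : ∀ C : Child T I, C.1.Nonempty := hT.child_nonempty
  rcases hrel with ⟨n, gc, hlt, hsurj, rfl⟩ | ⟨gc, hlt, hsurj, b', hb', rfl⟩ |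
    ⟨gc, hlt, -⟩ | ⟨P, -, hη⟩
  · exact hT.foldl_children_eq hI hnl (isConcatMul_omegaVal hg hgs hax hb) gc hlt hsurj
  · exact hT.omegaVal_eq_of_omega_children hg hgs hax hb hI hnl gc hlt hsurj hb'
  · exact absurd (fun n => hlt n (n + 1) n.lt_succ_self) (not_forall_setLT_pred fun n => hne (gc n))
  · exfalso
    rcases hη with ⟨hfam, -⟩ | ⟨_, -, hfam, -⟩ | ⟨_, -, hfam, -⟩ | ⟨_, _, -, -, -, hfam, -⟩ <;>
    exact hfam.exists_seq_pred.elim fun f hf => not_forall_setLT_pred (fun n => hne (f n)) hf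

end OmegaWord

/-! ### Words `b^{ω*} a` -/

section OmegaStarOrder

variable [LinearOrder α] {g : ℕ → α} (hg : StrictAnti g) (hgs : Function.Surjective g)
include hg hgs

theorem wellFoundedGT_of_strictAnti_surjective : WellFoundedGT α :=
  wellFoundedLT_of_strictMono_surjective (α := αᵒᵈ) hg.dual_right hgs

theorem le_apply_zero_of_strictAnti (x : α) : x ≤ g 0 :=
  apply_zero_le_of_strictMono (α := αᵒᵈ) hg.dual_right hgs x

theorem finite_of_forall_gt {A : Set α} {y : α} (h : ∀ x ∈ A, y < x) : A.Finite :=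
  finite_of_forall_lt (α := αᵒᵈ) hg.dual_right hgs h

end OmegaStarOrder

section OmegaStarWord

open scoped Classical

variable [LinearOrder α] [Nonempty α] [Semigroup S] {tau taustar : S → S}
  {kappa : Set S → S} {u : α → S} {T : Set (Set α)} {g : ℕ → α} {b : S}

/-- The value of `π₀^` on the factor over `I` of the word `b^{ω*} a` enumerated from the right
by `g`. -/
noncomputable def omegaStarVal (taustar : S → S) (u : α → S) (g : ℕ → α) (b : S) (I : Set α) :
    S :=
  if I.Finite then finProd u I else if g 0 ∈ I then taustar b * u (g 0) else taustar b

theorem omegaStarVal_singleton (x : α) : omegaStarVal taustar u g b {x} = u x := by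
  simp [omegaStarVal, finProd_singleton]

variable (hg : StrictAnti g) (hgs : Function.Surjective g)
  (hax : PlusAlgAxioms (· * ·) tau taustar kappa) (hb : ∀ x, x ≠ g 0 → u x = b)
include hg hgs hax hb

theorem taustar_mul_finProd {A : Set α} (hA : A.Finite) (hAne : A.Nonempty) :
    taustar b * finProd u A = if g 0 ∈ A then taustar b * u (g 0) else taustar b := by
  by_cases h0 : g 0 ∈ A
  · rw [if_pos h0]
    rcases (A \ {g 0}).eq_empty_or_nonempty with hA' | hA'
    · rw [(sdiff_eq_empty.1 hA').antisymm (singleton_subset_iff.2 h0), finProd_singleton]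
    · have hlt : SetLT (A \ {g 0}) {g 0} := fun x hx y hy => by
        rw [mem_singleton_iff.1 hy]
        exact (le_apply_zero_of_strictAnti hg hgs x).lt_of_ne hx.2
      obtain ⟨k, hk⟩ := finProd_eq_sPow (hA.sdiff) hA' fun x hx => hb x hx.2
      rw [← sdiff_union_of_subset (singleton_subset_iff.2 h0), finProd_union hA.sdiff
        (finite_singleton _) hA' (singleton_nonempty _) hlt, finProd_singleton, hk,
        ← mul_assoc, hax.taustar_mul_sPow]
  · obtain ⟨k, hk⟩ := finProd_eq_sPow hA hAne fun x hx => hb x (ne_of_mem_of_not_mem hx h0)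
    rw [if_neg h0, hk, hax.taustar_mul_sPow]

theorem isConcatMul_omegaStarVal : IsConcatMul (omegaStarVal taustar u g b) := by
  intro A B hA hB hlt _
  have hBfin : B.Finite := finite_of_forall_gt hg hgs fun y hy => hlt _ hA.some_mem y hy
  have h0A : g 0 ∉ A := fun h0 =>
    (hlt _ h0 _ hB.some_mem).not_ge (le_apply_zero_of_strictAnti hg hgs _)
  by_cases hAfin : A.Finite
  · simp only [omegaStarVal, hAfin, hBfin, hAfin.union hBfin, if_true]
    exact (finProd_union hAfin hBfin hA hB hlt).symm
  · have hABfin : ¬ (A ∪ B).Finite := fun h => hAfin (h.subset subset_union_left)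
    simp only [omegaStarVal, hAfin, hBfin, hABfin, h0A, if_true, if_false, mem_union, false_or]
    exact taustar_mul_finProd hg hgs hax hb hBfin hB

theorem IsCondTreeOn.omegaStarVal_eq_of_omegaStar_children (hT : IsCondTreeOn (univ : Set α) T)
    {I : Set α} (hI : I ∈ T) (hnl : ¬ IsLeafOf T I) (gc : ℕ → Child T I)
    (hlt : ∀ m n, m < n → SetLT (gc n).1 (gc m).1) (hsurj : ∀ C, ∃ n, gc n = C) {b' : S}
    (hb' : ∀ n, 0 < n → omegaStarVal taustar u g b (gc n).1 = b') :
    taustar b' * omegaStarVal taustar u g b (gc 0).1 = omegaStarVal taustar u g b I := by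
  have hne : ∀ C : Child T I, C.1.Nonempty := hT.child_nonempty
  have hprev : ∀ n, SetLT (gc (n + 1)).1 (gc n).1 := fun n => hlt n (n + 1) n.lt_succ_self
  have hfin : ∀ n, (gc n).1.Finite := fun n =>
    finite_of_forall_gt hg hgs fun x hx => hprev n _ (hne _).some_mem x hx
  have hg0 : ∀ n, 0 < n → g 0 ∉ (gc n).1 := fun n hn h0 =>
    (hlt 0 n hn _ h0 _ (hne _).some_mem).not_ge (le_apply_zero_of_strictAnti hg hgs _)
  have hIinf : I.Infinite := infinite_of_injective_forall_mem
    (strictAnti_nat_of_succ_lt fun n => hprev n _ (hne _).some_mem _ (hne _).some_mem).injective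
    fun n => (gc n).2.2.1.subset (hne (gc n)).some_mem
  have htaustar : taustar b' = taustar b := by
    obtain ⟨k, hk⟩ := finProd_eq_sPow (hfin 1) (hne _) fun x hx =>
      hb x fun h => hg0 1 one_pos (h ▸ hx)
    rw [← hb' 1 one_pos, omegaStarVal, if_pos (hfin 1), hk, hax.taustar_sPow]
  have hmem : g 0 ∈ I ↔ g 0 ∈ (gc 0).1 := by
    refine ⟨fun h => ?_, fun h => (gc 0).2.2.1.subset h⟩
    obtain ⟨C, hC⟩ := hT.exists_child_mem hI hnl h
    obtain ⟨m, rfl⟩ := hsurj C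
    rcases m.eq_zero_or_pos with rfl | hm
    exacts [hC, absurd hC (hg0 m hm)]
  rw [htaustar, omegaStarVal, omegaStarVal, if_pos (hfin 0), if_neg hIinf,
    taustar_mul_finProd hg hgs hax hb (hfin 0) (hne _), hmem]

theorem IsCondTreeOn.isPi0HatCompatible_omegaStarVal (hT : IsCondTreeOn (univ : Set α) T) :
    IsPi0HatCompatible tau taustar kappa T (omegaStarVal taustar u g b) := by
  have := wellFoundedGT_of_strictAnti_surjective hg hgs
  intro I hI hnl v hrel
  have hne : ∀ C : Child T I, C.1.Nonempty := hT.child_nonempty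
  rcases hrel with ⟨n, gc, hlt, hsurj, rfl⟩ | ⟨gc, hlt, -⟩ |
    ⟨gc, hlt, hsurj, b', hb', rfl⟩ | ⟨P, -, hη⟩
  · exact hT.foldl_children_eq hI hnl (isConcatMul_omegaStarVal hg hgs hax hb) gc hlt hsurj
  · exact absurd (fun n => hlt n (n + 1) n.lt_succ_self) (not_forall_setLT_succ fun n => hne (gc n))
  · exact hT.omegaStarVal_eq_of_omegaStar_children hg hgs hax hb hI hnl gc hlt hsurj hb'
  · exfalso
    rcases hη with ⟨hfam, -⟩ | ⟨_, -, hfam, -⟩ | ⟨_, -, hfam, -⟩ | ⟨_, _, -, -, -, hfam, -⟩ <;>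
    exact hfam.exists_seq_succ.elim fun f hf => not_forall_setLT_succ (fun n => hne (f n)) hf

end OmegaStarWord

/-! ### Words `a P^η b` -/

section ShuffleWord

variable [LinearOrder α]

theorem isLeast_union_iff_of_setLT {A B : Set α} (hlt : SetLT A B) (hA : A.Nonempty) {m : α} :
    IsLeast (A ∪ B) m ↔ IsLeast A m := by
  refine ⟨fun hm => ⟨hm.1.resolve_right fun hmB => ?_, fun y hy => hm.2 (Or.inl hy)⟩,
    fun hm => ⟨Or.inl hm.1, ?_⟩⟩
  · exact (hlt _ hA.some_mem m hmB).not_ge (hm.2 (Or.inl hA.some_mem))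
  · rintro y (hy | hy)
    exacts [hm.2 hy, (hlt m hm.1 y hy).le]

theorem isGreatest_union_iff_of_setLT {A B : Set α} (hlt : SetLT A B) (hB : B.Nonempty) {M : α} :
    IsGreatest (A ∪ B) M ↔ IsGreatest B M := by
  refine ⟨fun hM => ⟨hM.1.resolve_left fun hMA => ?_, fun y hy => hM.2 (Or.inr hy)⟩,
    fun hM => ⟨Or.inr hM.1, ?_⟩⟩
  · exact (hlt M hMA _ hB.some_mem).not_ge (hM.2 (Or.inr hB.some_mem))
  · rintro y (hy | hy)
    exacts [(hlt y hy M hM.1).le, hM.2 hy]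

/-- What the proof uses of a word `a P^η b` (either end letter may be absent). -/
structure IsShuffleWord (u : α → S) (P : Set S) : Prop where
  mem_of_lt_of_lt : ∀ ⦃x y z : α⦄, y < x → x < z → u x ∈ P
  exists_letter_between : ∀ c ∈ P, ∀ ⦃p q : α⦄, p < q → ∃ z, p < z ∧ z < q ∧ u z = c

theorem IsEtaFamilyOn.isShuffleWord {u : α → S} {P : Set S} {D : Set α}
    (hP : P.Nonempty) (hfam : IsEtaFamilyOn (fun x y : α => x < y) u D P)
    (hout : ∀ x ∉ D, (∀ y, y ≠ x → x < y) ∨ (∀ y, y ≠ x → y < x)) : IsShuffleWord u P := by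
  obtain ⟨hDne, -, habove, hbelow, hlab, hdense, -⟩ := hfam
  have hmem : ∀ ⦃x y z : α⦄, y < x → x < z → x ∈ D := fun x y z hyx hxz => by
    by_contra hx
    rcases hout x hx with h | h
    exacts [(h y hyx.ne).not_gt hyx, (h z hxz.ne').not_gt hxz]
  -- positions outside `D` are extremal, so `D` meets every open interval
  have hD : ∀ ⦃p q : α⦄, p < q → ∃ z ∈ D, p < z ∧ z < q := fun p q hpq => by
    by_cases hp : p ∈ D
    · by_cases hq : q ∈ D
      · obtain ⟨z, hz, hpz, hzq, -⟩ := hdense _ hP.some_mem p hp q hq hpq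
        exact ⟨z, hz, hpz, hzq⟩
      · obtain ⟨z, hz, hpz⟩ := habove p hp
        exact ⟨z, hz, hpz, ((hout q hq).resolve_left fun h => (h p hpq.ne).not_gt hpq) z
          (ne_of_mem_of_not_mem hz hq)⟩
    · have hpmin := (hout p hp).resolve_right fun h => (h q hpq.ne').not_gt hpq
      by_cases hq : q ∈ D
      · obtain ⟨z, hz, hzq⟩ := hbelow q hq
        exact ⟨z, hz, hpmin z (ne_of_mem_of_not_mem hz hp), hzq⟩
      · obtain ⟨z, hz⟩ := hDne
        exact ⟨z, hz, hpmin z (ne_of_mem_of_not_mem hz hp), ((hout q hq).resolve_left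
          fun h => (h p hpq.ne).not_gt hpq) z (ne_of_mem_of_not_mem hz hq)⟩
  refine ⟨fun x y z hyx hxz => hlab x (hmem hyx hxz), fun c hc p q hpq => ?_⟩
  obtain ⟨p', hp', hpp', hp'q⟩ := hD hpq
  obtain ⟨q', hq', hp'q', hq'q⟩ := hD hp'q
  obtain ⟨z, -, hp'z, hzq', hz⟩ := hdense c hc p' hp' q' hq' hp'q'
  exact ⟨z, hpp'.trans hp'z, hzq'.trans hq'q, hz⟩

namespace IsShuffleWord

variable {u : α → S} {P : Set S} (hw : IsShuffleWord u P)
include hw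

theorem exists_between (hP : P.Nonempty) {p q : α} (hpq : p < q) : ∃ z, p < z ∧ z < q :=
  let ⟨z, hpz, hzq, _⟩ := hw.exists_letter_between _ hP.some_mem hpq
  ⟨z, hpz, hzq⟩

theorem mem_of_isLeast {C : Set α} (hC : C.Nontrivial) {m y : α} (hm : IsLeast C m)
    (hy : y < m) : u m ∈ P := by
  obtain ⟨x, hx, x', hx', hne⟩ := hC
  rcases (hm.2 hx).lt_or_eq with h | rfl
  · exact hw.mem_of_lt_of_lt hy h
  · exact hw.mem_of_lt_of_lt hy ((hm.2 hx').lt_of_ne hne)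

theorem mem_of_isGreatest {C : Set α} (hC : C.Nontrivial) {M z : α} (hM : IsGreatest C M)
    (hz : M < z) : u M ∈ P := by
  obtain ⟨x, hx, x', hx', hne⟩ := hC
  rcases (hM.2 hx).lt_or_eq with h | rfl
  · exact hw.mem_of_lt_of_lt h hz
  · exact hw.mem_of_lt_of_lt ((hM.2 hx').lt_of_ne hne.symm) hz

theorem not_isGreatest_and_isLeast (hP : P.Nonempty) {A B : Set α} (hlt : SetLT A B)
    (hconn : (A ∪ B).OrdConnected) {M m : α} (hM : IsGreatest A M) (hm : IsLeast B m) : False := by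
  obtain ⟨z, hMz, hzm⟩ := hw.exists_between hP (hlt M hM.1 m hm.1)
  rcases hconn.out (Or.inl hM.1) (Or.inr hm.1) ⟨hMz.le, hzm.le⟩ with hz | hz
  exacts [(hM.2 hz).not_gt hMz, (hm.2 hz).not_gt hzm]

end IsShuffleWord

end ShuffleWord

section ShuffleValue

open scoped Classical

variable [LinearOrder α] [Semigroup S] {u : α → S} {I J : Set α} {s t : S}

noncomputable def mulLeast (u : α → S) (I : Set α) (s : S) : S :=
  if h : ∃ m, IsLeast I m then u h.choose * s else s

noncomputable def mulGreatest (u : α → S) (I : Set α) (s : S) : S :=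
  if h : ∃ M, IsGreatest I M then s * u h.choose else s

/-- The value of `π₀^` on the factor over `I` of a word `a P^η b`, where `K = κ P`. -/
noncomputable def shuffleVal (u : α → S) (K : S) (I : Set α) : S :=
  if h : ∃ x, I = {x} then u h.choose else mulLeast u I (mulGreatest u I K)

theorem mulLeast_of_isLeast {m : α} (hm : IsLeast I m) : mulLeast u I s = u m * s := by
  have h : ∃ m, IsLeast I m := ⟨m, hm⟩
  rw [mulLeast, dif_pos h, h.choose_spec.unique hm]

theorem mulLeast_of_not (h : ∀ m, ¬ IsLeast I m) : mulLeast u I s = s := by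
  rw [mulLeast, dif_neg (not_exists.2 h)]

theorem mulGreatest_of_isGreatest {M : α} (hM : IsGreatest I M) :
    mulGreatest u I s = s * u M := by
  have h : ∃ M, IsGreatest I M := ⟨M, hM⟩
  rw [mulGreatest, dif_pos h, h.choose_spec.unique hM]

theorem mulGreatest_of_not (h : ∀ M, ¬ IsGreatest I M) : mulGreatest u I s = s := by
  rw [mulGreatest, dif_neg (not_exists.2 h)]

theorem mulLeast_mul : mulLeast u I (s * t) = mulLeast u I s * t := by
  unfold mulLeast
  split_ifs <;> simp only [mul_assoc]

theorem mul_mulGreatest : s * mulGreatest u I t = mulGreatest u I (s * t) := by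
  unfold mulGreatest
  split_ifs <;> simp only [mul_assoc]

theorem mulLeast_mulGreatest :
    mulLeast u I (mulGreatest u J s) = mulGreatest u J (mulLeast u I s) := by
  unfold mulLeast mulGreatest
  split_ifs <;> simp only [mul_assoc]

theorem mulLeast_congr (h : ∀ m, IsLeast I m ↔ IsLeast J m) :
    mulLeast u I s = mulLeast u J s := by
  by_cases hI : ∃ m, IsLeast I m
  · obtain ⟨m, hm⟩ := hI
    rw [mulLeast_of_isLeast hm, mulLeast_of_isLeast ((h m).1 hm)]
  · rw [not_exists] at hI
    rw [mulLeast_of_not hI, mulLeast_of_not fun m hm => hI m ((h m).2 hm)]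

theorem mulGreatest_congr (h : ∀ M, IsGreatest I M ↔ IsGreatest J M) :
    mulGreatest u I s = mulGreatest u J s := by
  by_cases hI : ∃ M, IsGreatest I M
  · obtain ⟨M, hM⟩ := hI
    rw [mulGreatest_of_isGreatest hM, mulGreatest_of_isGreatest ((h M).1 hM)]
  · rw [not_exists] at hI
    rw [mulGreatest_of_not hI, mulGreatest_of_not fun M hM => hI M ((h M).2 hM)]

theorem shuffleVal_singleton (K : S) (x : α) : shuffleVal u K {x} = u x := by
  have h : ∃ y, ({x} : Set α) = {y} := ⟨x, rfl⟩
  rw [shuffleVal, dif_pos h]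
  exact congrArg u (singleton_eq_singleton_iff.1 h.choose_spec).symm

theorem shuffleVal_of_nontrivial (K : S) (hI : I.Nontrivial) :
    shuffleVal u K I = mulLeast u I (mulGreatest u I K) := by
  rw [shuffleVal, dif_neg fun ⟨x, hx⟩ => hI.ne_singleton hx]

variable {kappa : Set S → S} {P : Set S}

theorem mulLeast_mulGreatest_mem_kappaForms (hl : ∀ m, IsLeast I m → u m ∈ P)
    (hg : ∀ M, IsGreatest I M → u M ∈ P) :
    mulLeast u I (mulGreatest u I (kappa P)) ∈ kappaForms kappa P := by
  by_cases hm : ∃ m, IsLeast I m <;> by_cases hM : ∃ M, IsGreatest I M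
  · obtain ⟨m, hm⟩ := hm
    obtain ⟨M, hM⟩ := hM
    rw [mulLeast_of_isLeast hm, mulGreatest_of_isGreatest hM, ← mul_assoc]
    exact Or.inr (Or.inr (Or.inr ⟨_, hl m hm, _, hg M hM, rfl⟩))
  · obtain ⟨m, hm⟩ := hm
    rw [mulLeast_of_isLeast hm, mulGreatest_of_not (not_exists.1 hM)]
    exact Or.inr (Or.inl ⟨_, hl m hm, rfl⟩)
  · obtain ⟨M, hM⟩ := hM
    rw [mulLeast_of_not (not_exists.1 hm), mulGreatest_of_isGreatest hM]
    exact Or.inr (Or.inr (Or.inl ⟨_, hg M hM, rfl⟩))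
  · rw [mulLeast_of_not (not_exists.1 hm), mulGreatest_of_not (not_exists.1 hM)]
    exact Or.inl rfl

variable {tau taustar : S → S}
  (hax : PlusAlgAxioms (· * ·) tau taustar kappa) (hP : P.Nonempty)
include hax hP

theorem mulGreatest_kappa_mul_kappa (hI : ∀ M, IsGreatest I M → u M ∈ P) :
    mulGreatest u I (kappa P) * kappa P = kappa P := by
  by_cases h : ∃ M, IsGreatest I M
  · obtain ⟨M, hM⟩ := h
    rw [mulGreatest_of_isGreatest hM, mul_assoc, hax.kappa_mul_mul_kappa hP (hI M hM)]
  · rw [mulGreatest_of_not (not_exists.1 h), hax.kappa_mul_self hP]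

theorem kappa_mul_mulLeast_kappa (hI : ∀ m, IsLeast I m → u m ∈ P) :
    kappa P * mulLeast u I (kappa P) = kappa P := by
  by_cases h : ∃ m, IsLeast I m
  · obtain ⟨m, hm⟩ := h
    rw [mulLeast_of_isLeast hm, hax.kappa_mul_mul_kappa hP (hI m hm)]
  · rw [mulLeast_of_not (not_exists.1 h), hax.kappa_mul_self hP]

theorem tau_mulLeast_kappa (hI : ∀ m, IsLeast I m → u m ∈ P) :
    tau (mulLeast u I (kappa P)) = mulLeast u I (kappa P) := by
  by_cases h : ∃ m, IsLeast I m
  · obtain ⟨m, hm⟩ := h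
    rw [mulLeast_of_isLeast hm, hax.tau_mul_kappa hP (hI m hm)]
  · rw [mulLeast_of_not (not_exists.1 h), hax.tau_kappa hP]

theorem tau_mulGreatest_kappa (hI : ∀ M, IsGreatest I M → u M ∈ P) :
    tau (mulGreatest u I (kappa P)) = kappa P := by
  by_cases h : ∃ M, IsGreatest I M
  · obtain ⟨M, hM⟩ := h
    rw [mulGreatest_of_isGreatest hM, hax.tau_kappa_mul hP (hI M hM)]
  · rw [mulGreatest_of_not (not_exists.1 h), hax.tau_kappa hP]

theorem taustar_mulGreatest_kappa (hI : ∀ M, IsGreatest I M → u M ∈ P) :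
    taustar (mulGreatest u I (kappa P)) = mulGreatest u I (kappa P) := by
  by_cases h : ∃ M, IsGreatest I M
  · obtain ⟨M, hM⟩ := h
    rw [mulGreatest_of_isGreatest hM, hax.taustar_kappa_mul hP (hI M hM)]
  · rw [mulGreatest_of_not (not_exists.1 h), hax.taustar_kappa hP]

theorem taustar_mulLeast_kappa (hI : ∀ m, IsLeast I m → u m ∈ P) :
    taustar (mulLeast u I (kappa P)) = kappa P := by
  by_cases h : ∃ m, IsLeast I m
  · obtain ⟨m, hm⟩ := h
    rw [mulLeast_of_isLeast hm, hax.taustar_mul_kappa hP (hI m hm)]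
  · rw [mulLeast_of_not (not_exists.1 h), hax.taustar_kappa hP]

end ShuffleValue

section ShuffleCompat

variable [LinearOrder α] [Semigroup S] {tau taustar : S → S} {kappa : Set S → S} {u : α → S}
  {P : Set S} {T : Set (Set α)}

theorem IsCondTreeOn.nontrivial_of_setLT (hT : IsCondTreeOn (univ : Set α) T) {I : Set α}
    {C C' : Child T I} (h : SetLT C.1 C'.1) : I.Nontrivial :=
  nontrivial_of_lt (C.2.2.1.subset (hT.child_nonempty C).some_mem)
    (C'.2.2.1.subset (hT.child_nonempty C').some_mem)
    (h _ (hT.child_nonempty C).some_mem _ (hT.child_nonempty C').some_mem)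

namespace IsShuffleWord

variable (hw : IsShuffleWord u P) (hax : PlusAlgAxioms (· * ·) tau taustar kappa)
  (hP : P.Nonempty)
include hw hax hP

theorem shuffleVal_mul_kappa {A : Set α} (hA : A.Nonempty) {z : α} (hz : ∀ x ∈ A, x < z) :
    shuffleVal u (kappa P) A * kappa P = mulLeast u A (kappa P) := by
  rcases hA.exists_eq_singleton_or_nontrivial with ⟨x, rfl⟩ | hA
  · rw [shuffleVal_singleton, mulLeast_of_isLeast isLeast_singleton]
  · rw [shuffleVal_of_nontrivial _ hA, ← mulLeast_mul, mulGreatest_kappa_mul_kappa hax hP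
      fun M hM => hw.mem_of_isGreatest hA hM (hz M hM.1)]

theorem kappa_mul_shuffleVal {B : Set α} (hB : B.Nonempty) {y : α} (hy : ∀ x ∈ B, y < x) :
    kappa P * shuffleVal u (kappa P) B = mulGreatest u B (kappa P) := by
  rcases hB.exists_eq_singleton_or_nontrivial with ⟨x, rfl⟩ | hB
  · rw [shuffleVal_singleton, mulGreatest_of_isGreatest isGreatest_singleton]
  · rw [shuffleVal_of_nontrivial _ hB, mulLeast_mulGreatest, mul_mulGreatest,
      kappa_mul_mulLeast_kappa hax hP fun m hm => hw.mem_of_isLeast hB hm (hy m hm.1)]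

theorem isConcatMul_shuffleVal : IsConcatMul (shuffleVal u (kappa P)) := by
  intro A B hA hB hlt hconn
  have hjunction : ∀ {M m}, IsGreatest A M → IsLeast B m → False :=
    hw.not_isGreatest_and_isLeast hP hlt hconn
  have hABnt : (A ∪ B).Nontrivial := nontrivial_of_lt (Or.inl hA.some_mem) (Or.inr hB.some_mem)
    (hlt _ hA.some_mem _ hB.some_mem)
  rw [shuffleVal_of_nontrivial _ hABnt, mulLeast_congr fun _ => isLeast_union_iff_of_setLT hlt hA,
    mulGreatest_congr fun _ => isGreatest_union_iff_of_setLT hlt hB]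
  rcases hA.exists_eq_singleton_or_nontrivial with ⟨x, rfl⟩ | hAnt <;>
    rcases hB.exists_eq_singleton_or_nontrivial with ⟨y, rfl⟩ | hBnt
  · exact (hjunction isGreatest_singleton isLeast_singleton).elim
  · rw [shuffleVal_singleton, shuffleVal_of_nontrivial _ hBnt,
      mulLeast_of_isLeast isLeast_singleton,
      mulLeast_of_not fun m hm => hjunction isGreatest_singleton hm]
  · rw [shuffleVal_singleton, shuffleVal_of_nontrivial _ hAnt,
      mulGreatest_of_isGreatest isGreatest_singleton,
      mulGreatest_of_not fun M hM => hjunction hM isLeast_singleton, mulLeast_mul]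
  · have hgreatest : ∀ M, IsGreatest A M → u M ∈ P := fun M hM =>
      hw.mem_of_isGreatest hAnt hM (hlt M hM.1 _ hB.some_mem)
    have hleast : ∀ m, IsLeast B m → u m ∈ P := fun m hm =>
      hw.mem_of_isLeast hBnt hm (hlt _ hA.some_mem m hm.1)
    have hmid : mulGreatest u A (kappa P) * mulLeast u B (kappa P) = kappa P := by
      by_cases hM : ∃ M, IsGreatest A M
      · rw [mulLeast_of_not fun m hm => hjunction hM.choose_spec hm,
          mulGreatest_kappa_mul_kappa hax hP hgreatest]
      · rw [mulGreatest_of_not (not_exists.1 hM), kappa_mul_mulLeast_kappa hax hP hleast]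
    rw [shuffleVal_of_nontrivial _ hAnt, shuffleVal_of_nontrivial _ hBnt, ← mulLeast_mul,
      mulLeast_mulGreatest (I := B), mul_mulGreatest, hmid]

end IsShuffleWord

end ShuffleCompat

section ShuffleNode

variable [LinearOrder α] [Semigroup S] {tau taustar : S → S} {kappa : Set S → S} {u : α → S}
  {P : Set S} {T : Set (Set α)} {I : Set α}

namespace IsShuffleWord

variable (hw : IsShuffleWord u P) (hax : PlusAlgAxioms (· * ·) tau taustar kappa)
  (hP : P.Nonempty) (hT : IsCondTreeOn (univ : Set α) T) (hI : I ∈ T) (hnl : ¬ IsLeafOf T I)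
include hw hax hP hT hI hnl

theorem first_child_mul_kappa (A : Child T I) (hA : ∀ C : Child T I, C ≠ A → SetLT A.1 C.1)
    {C : Child T I} (hC : C ≠ A) :
    shuffleVal u (kappa P) A.1 * kappa P = mulLeast u I (kappa P) := by
  rw [hw.shuffleVal_mul_kappa hax hP (hT.child_nonempty A)
      (hA C hC · · _ (hT.child_nonempty C).some_mem),
    mulLeast_congr fun m => (hT.isLeast_iff_of_first hI hnl A hA m).symm]

theorem kappa_mul_last_child (B : Child T I) (hB : ∀ C : Child T I, C ≠ B → SetLT C.1 B.1)
    {C : Child T I} (hC : C ≠ B) :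
    kappa P * shuffleVal u (kappa P) B.1 = mulGreatest u I (kappa P) := by
  rw [hw.kappa_mul_shuffleVal hax hP (hT.child_nonempty B)
      (hB C hC _ (hT.child_nonempty C).some_mem · ·),
    mulGreatest_congr fun M => (hT.isGreatest_iff_of_last hI hnl B hB M).symm]

theorem eq_of_omega_children (g : ℕ → Child T I) (hlt : ∀ m n, m < n → SetLT (g m).1 (g n).1)
    (hsurj : ∀ C, ∃ n, g n = C) {b : S} (hb : ∀ n, 0 < n → shuffleVal u (kappa P) (g n).1 = b) :
    shuffleVal u (kappa P) (g 0).1 * tau b = shuffleVal u (kappa P) I := by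
  have hne := hT.child_nonempty (I := I)
  have hnext : ∀ n, SetLT (g n).1 (g (n + 1)).1 := fun n => hlt n (n + 1) n.lt_succ_self
  have hadj : ∀ n, ((g n).1 ∪ (g (n + 1)).1).OrdConnected := fun n =>
    hT.ordConnected_union_of_adjacent hI hnl _ _ (hnext n) fun C hC hC' => by
      obtain ⟨m, rfl⟩ := hsurj C
      rcases lt_or_gt_of_ne (fun h : m = n => hC (h ▸ rfl)) with h | h
      exacts [Or.inl (hlt m n h),
        Or.inr (hlt _ m (lt_of_le_of_ne (Nat.succ_le_of_lt h) fun h' => hC' (by rw [h'])))]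
  have hfirst : ∀ C, C ≠ g 0 → SetLT (g 0).1 C.1 := fun C hC => by
    obtain ⟨m, rfl⟩ := hsurj C
    exact hlt 0 m (Nat.pos_of_ne_zero fun h => hC (h ▸ rfl))
  have hnoMax : ∀ M, ¬ IsGreatest I M := hT.not_isGreatest_of_forall_exists_setLT hI hnl
    fun C => (hsurj C).elim fun m hm => ⟨_, hm ▸ hnext m⟩
  rw [shuffleVal_of_nontrivial _ (hT.nontrivial_of_setLT (hnext 0)), mulGreatest_of_not hnoMax,
    ← hw.first_child_mul_kappa hax hP hT hI hnl (g 0) hfirst (C := g 1)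
      fun h => setLT_irrefl (hne _) (h ▸ hnext 0)]
  by_cases hmax : ∃ M, IsGreatest (g 1).1 M
  · -- then `g 2` has no least element, and `τ` of its value is `κ P`
    have hnoMin : ∀ m, ¬ IsLeast (g 2).1 m := fun m hm =>
      hw.not_isGreatest_and_isLeast hP (hnext 1) (hadj 1) hmax.choose_spec hm
    have hnt : (g 2).1.Nontrivial := (hne _).exists_eq_singleton_or_nontrivial.resolve_left
      fun ⟨x, hx⟩ => hnoMin x (hx ▸ isLeast_singleton)
    rw [← hb 2 two_pos, shuffleVal_of_nontrivial _ hnt, mulLeast_of_not hnoMin,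
      tau_mulGreatest_kappa hax hP fun M hM =>
        hw.mem_of_isGreatest hnt hM (hnext 2 M hM.1 _ (hne _).some_mem)]
  · -- then the value of `g 1` is a fixed point of `τ`, and absorbs into that of `g 0`
    have hnt : (g 1).1.Nontrivial := (hne _).exists_eq_singleton_or_nontrivial.resolve_left
      fun ⟨x, hx⟩ => hmax ⟨x, hx ▸ isGreatest_singleton⟩
    have hval : shuffleVal u (kappa P) (g 1).1 = mulLeast u (g 1).1 (kappa P) := by
      rw [shuffleVal_of_nontrivial _ hnt, mulGreatest_of_not (not_exists.1 hmax)]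
    rw [← hb 1 one_pos, hval, tau_mulLeast_kappa hax hP fun m hm =>
        hw.mem_of_isLeast hnt hm (hnext 0 _ (hne _).some_mem m hm.1), ← hval,
      hw.isConcatMul_shuffleVal hax hP _ _ (hne _) (hne _) (hnext 0) (hadj 0),
      shuffleVal_of_nontrivial _ (hnt.mono subset_union_right),
      mulGreatest_congr fun _ => isGreatest_union_iff_of_setLT (hnext 0) (hne _),
      mulGreatest_of_not (not_exists.1 hmax),
      mulLeast_congr fun _ => isLeast_union_iff_of_setLT (hnext 0) (hne _),
      hw.shuffleVal_mul_kappa hax hP (hne _) (hnext 0 · · _ (hne _).some_mem)]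

theorem eq_of_omegaStar_children (g : ℕ → Child T I)
    (hlt : ∀ m n, m < n → SetLT (g n).1 (g m).1) (hsurj : ∀ C, ∃ n, g n = C) {b : S}
    (hb : ∀ n, 0 < n → shuffleVal u (kappa P) (g n).1 = b) :
    taustar b * shuffleVal u (kappa P) (g 0).1 = shuffleVal u (kappa P) I := by
  have hne := hT.child_nonempty (I := I)
  have hprev : ∀ n, SetLT (g (n + 1)).1 (g n).1 := fun n => hlt n (n + 1) n.lt_succ_self
  have hadj : ∀ n, ((g (n + 1)).1 ∪ (g n).1).OrdConnected := fun n =>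
    hT.ordConnected_union_of_adjacent hI hnl _ _ (hprev n) fun C hC' hC => by
      obtain ⟨m, rfl⟩ := hsurj C
      rcases lt_or_gt_of_ne (fun h : m = n => hC (h ▸ rfl)) with h | h
      exacts [Or.inr (hlt m n h),
        Or.inl (hlt _ m (lt_of_le_of_ne (Nat.succ_le_of_lt h) fun h' => hC' (by rw [h'])))]
  have hlast : ∀ C, C ≠ g 0 → SetLT C.1 (g 0).1 := fun C hC => by
    obtain ⟨m, rfl⟩ := hsurj C
    exact hlt 0 m (Nat.pos_of_ne_zero fun h => hC (h ▸ rfl))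
  have hnoMin : ∀ m, ¬ IsLeast I m := hT.not_isLeast_of_forall_exists_setLT hI hnl
    fun C => (hsurj C).elim fun m hm => ⟨_, hm ▸ hprev m⟩
  rw [shuffleVal_of_nontrivial _ (hT.nontrivial_of_setLT (hprev 0)), mulLeast_of_not hnoMin,
    ← hw.kappa_mul_last_child hax hP hT hI hnl (g 0) hlast (C := g 1)
      fun h => setLT_irrefl (hne _) (h ▸ hprev 0)]
  by_cases hmin : ∃ m, IsLeast (g 1).1 m
  · have hnoMax : ∀ M, ¬ IsGreatest (g 2).1 M := fun M hM =>
      hw.not_isGreatest_and_isLeast hP (hprev 1) (hadj 1) hM hmin.choose_spec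
    have hnt : (g 2).1.Nontrivial := (hne _).exists_eq_singleton_or_nontrivial.resolve_left
      fun ⟨x, hx⟩ => hnoMax x (hx ▸ isGreatest_singleton)
    rw [← hb 2 two_pos, shuffleVal_of_nontrivial _ hnt, mulGreatest_of_not hnoMax,
      taustar_mulLeast_kappa hax hP fun m hm =>
        hw.mem_of_isLeast hnt hm (hprev 2 _ (hne _).some_mem m hm.1)]
  · have hnt : (g 1).1.Nontrivial := (hne _).exists_eq_singleton_or_nontrivial.resolve_left
      fun ⟨x, hx⟩ => hmin ⟨x, hx ▸ isLeast_singleton⟩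
    have hval : shuffleVal u (kappa P) (g 1).1 = mulGreatest u (g 1).1 (kappa P) := by
      rw [shuffleVal_of_nontrivial _ hnt, mulLeast_of_not (not_exists.1 hmin)]
    rw [← hb 1 one_pos, hval, taustar_mulGreatest_kappa hax hP fun M hM =>
        hw.mem_of_isGreatest hnt hM (hprev 0 M hM.1 _ (hne _).some_mem), ← hval,
      hw.isConcatMul_shuffleVal hax hP _ _ (hne _) (hne _) (hprev 0) (hadj 0),
      shuffleVal_of_nontrivial _ (hnt.mono subset_union_left),
      mulLeast_congr fun _ => isLeast_union_iff_of_setLT (hprev 0) (hne _),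
      mulLeast_of_not (not_exists.1 hmin),
      mulGreatest_congr fun _ => isGreatest_union_iff_of_setLT (hprev 0) (hne _),
      hw.kappa_mul_shuffleVal hax hP (hne _) (hprev 0 _ (hne _).some_mem · ·)]

variable {P' : Set S}

omit hax hP in
theorem subset_of_singleton_children {D : Set (Child T I)}
    (hfam : IsEtaFamilyOn (fun J K : Child T I => SetLT J.1 K.1)
      (fun J => shuffleVal u (kappa P) J.1) D P')
    (hout : ∀ C ∉ D, (∀ J, J ≠ C → SetLT C.1 J.1) ∨ (∀ J, J ≠ C → SetLT J.1 C.1))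
    (hsing : ∀ C ∈ D, ∃ x, C.1 = {x}) : P ⊆ P' := by
  intro c hc
  obtain ⟨C₁, hC₁⟩ := hfam.1
  obtain ⟨C₂, hC₂, h21⟩ := hfam.2.2.2.1 C₁ hC₁
  obtain ⟨q₁, hq₁⟩ := hsing C₁ hC₁
  obtain ⟨q₂, hq₂⟩ := hsing C₂ hC₂
  have hq : q₂ < q₁ := h21 q₂ (hq₂ ▸ rfl) q₁ (hq₁ ▸ rfl)
  obtain ⟨z, hz₂, hz₁, rfl⟩ := hw.exists_letter_between c hc hq
  obtain ⟨C, hzC⟩ := hT.exists_child_mem hI hnl ((hT.ordConnected hI).out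
    (C₂.2.2.1.subset (hq₂ ▸ rfl)) (C₁.2.2.1.subset (hq₁ ▸ rfl)) ⟨hz₂.le, hz₁.le⟩)
  have hC₂C : C₂ ≠ C := fun h => hz₂.ne' (by rw [← h, hq₂] at hzC; exact hzC)
  have hC₁C : C₁ ≠ C := fun h => hz₁.ne (by rw [← h, hq₁] at hzC; exact hzC)
  have hCD : C ∈ D := by
    by_contra hCD
    rcases hout C hCD with h | h
    · exact (h C₂ hC₂C z hzC q₂ (hq₂ ▸ rfl)).not_gt hz₂
    · exact (h C₁ hC₁C q₁ (hq₁ ▸ rfl) z hzC).not_gt hz₁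
  obtain ⟨w, hCw⟩ := hsing C hCD
  have hlab : shuffleVal u (kappa P) C.1 ∈ P' := hfam.2.2.2.2.1 C hCD
  have hzw : z = w := by rw [hCw] at hzC; exact hzC
  rwa [hCw, shuffleVal_singleton, ← hzw] at hlab

theorem kappa_eq_of_children {D : Set (Child T I)}
    (hfam : IsEtaFamilyOn (fun J K : Child T I => SetLT J.1 K.1)
      (fun J => shuffleVal u (kappa P) J.1) D P')
    (hout : ∀ C ∉ D, (∀ J, J ≠ C → SetLT C.1 J.1) ∨ (∀ J, J ≠ C → SetLT J.1 C.1)) :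
    kappa P' = kappa P := by
  have hne := hT.child_nonempty (I := I)
  -- every block of the family has blocks on both sides, so its end letters lie in `P`
  have hbounds : ∀ C ∈ D, (∃ y, ∀ x ∈ C.1, y < x) ∧ ∃ z, ∀ x ∈ C.1, x < z := fun C hC =>
    let ⟨C₁, _, h₁⟩ := hfam.2.2.2.1 C hC
    let ⟨C₂, _, h₂⟩ := hfam.2.2.1 C hC
    ⟨⟨_, h₁ _ (hne C₁).some_mem⟩, ⟨_, fun x hx => h₂ x hx _ (hne C₂).some_mem⟩⟩
  have hsing : ∀ C ∈ D, ∀ x, C.1 = {x} → shuffleVal u (kappa P) C.1 ∈ P := fun C hC x hx => by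
    obtain ⟨⟨y, hy⟩, z, hz⟩ := hbounds C hC
    rw [hx, shuffleVal_singleton]
    exact hw.mem_of_lt_of_lt (hy x (hx ▸ rfl)) (hz x (hx ▸ rfl))
  have hforms : ∀ C ∈ D, C.1.Nontrivial → shuffleVal u (kappa P) C.1 ∈ kappaForms kappa P :=
    fun C hC hnt => by
    obtain ⟨⟨y, hy⟩, z, hz⟩ := hbounds C hC
    rw [shuffleVal_of_nontrivial _ hnt]
    exact mulLeast_mulGreatest_mem_kappaForms (fun m hm => hw.mem_of_isLeast hnt hm (hy m hm.1))
      fun M hM => hw.mem_of_isGreatest hnt hM (hz M hM.1)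
  by_cases hnt : ∃ C ∈ D, C.1.Nontrivial
  · obtain ⟨C, hC, hCnt⟩ := hnt
    have hsub : P' ⊆ P ∪ kappaForms kappa P := fun c hc => by
      obtain ⟨C', hC', rfl⟩ := hfam.2.2.2.2.2.2 c hc
      rcases (hne C').exists_eq_singleton_or_nontrivial with ⟨x, hx⟩ | hnt'
      exacts [Or.inl (hsing C' hC' x hx), Or.inr (hforms C' hC' hnt')]
    rw [← inter_eq_left.2 hsub, inter_union_distrib_left]
    exact hax.kappa_union_eq hP inter_subset_right ⟨_, hfam.2.2.2.2.1 C hC, hforms C hC hCnt⟩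
      inter_subset_right
  · have hsing' : ∀ C ∈ D, ∃ x, C.1 = {x} := fun C hC =>
      (hne C).exists_eq_singleton_or_nontrivial.resolve_right fun h => hnt ⟨C, hC, h⟩
    refine congrArg kappa (Subset.antisymm (fun c hc => ?_)
      (hw.subset_of_singleton_children hT hI hnl hfam hout hsing'))
    obtain ⟨C, hC, rfl⟩ := hfam.2.2.2.2.2.2 c hc
    obtain ⟨x, hx⟩ := hsing' C hC
    exact hsing C hC x hx

theorem eq_of_eta_children
    (hfam : IsEtaFamilyOn (fun J K : Child T I => SetLT J.1 K.1)
      (fun J => shuffleVal u (kappa P) J.1) univ P') :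
    kappa P' = shuffleVal u (kappa P) I := by
  obtain ⟨C, -⟩ := hfam.1
  obtain ⟨C', -, hC'C⟩ := hfam.2.2.2.1 C trivial
  rw [hw.kappa_eq_of_children hax hP hT hI hnl hfam fun C hC => absurd trivial hC,
    shuffleVal_of_nontrivial _ (hT.nontrivial_of_setLT hC'C),
    mulGreatest_of_not (hT.not_isGreatest_of_forall_exists_setLT hI hnl fun C =>
      let ⟨C', _, h⟩ := hfam.2.2.1 C trivial; ⟨C', h⟩),
    mulLeast_of_not (hT.not_isLeast_of_forall_exists_setLT hI hnl fun C =>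
      let ⟨C', _, h⟩ := hfam.2.2.2.1 C trivial; ⟨C', h⟩)]

theorem eq_of_eta_children_first (A : Child T I) (hA : ∀ C : Child T I, C ≠ A → SetLT A.1 C.1)
    (hfam : IsEtaFamilyOn (fun J K : Child T I => SetLT J.1 K.1)
      (fun J => shuffleVal u (kappa P) J.1) {C | C ≠ A} P') :
    shuffleVal u (kappa P) A.1 * kappa P' = shuffleVal u (kappa P) I := by
  obtain ⟨C₁, hC₁⟩ := hfam.1
  have hnoMax : ∀ M, ¬ IsGreatest I M := hT.not_isGreatest_of_forall_exists_setLT hI hnl fun C => by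
    by_cases hCA : C = A
    · exact ⟨C₁, hCA ▸ hA C₁ hC₁⟩
    · obtain ⟨C', -, h⟩ := hfam.2.2.1 C hCA
      exact ⟨C', h⟩
  rw [hw.kappa_eq_of_children hax hP hT hI hnl hfam fun C hC => Or.inl (not_not.1 hC ▸ hA),
    hw.first_child_mul_kappa hax hP hT hI hnl A hA hC₁,
    shuffleVal_of_nontrivial _ (hT.nontrivial_of_setLT (hA C₁ hC₁)), mulGreatest_of_not hnoMax]

theorem eq_of_eta_children_last (B : Child T I) (hB : ∀ C : Child T I, C ≠ B → SetLT C.1 B.1)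
    (hfam : IsEtaFamilyOn (fun J K : Child T I => SetLT J.1 K.1)
      (fun J => shuffleVal u (kappa P) J.1) {C | C ≠ B} P') :
    kappa P' * shuffleVal u (kappa P) B.1 = shuffleVal u (kappa P) I := by
  obtain ⟨C₁, hC₁⟩ := hfam.1
  have hnoMin : ∀ m, ¬ IsLeast I m := hT.not_isLeast_of_forall_exists_setLT hI hnl fun C => by
    by_cases hCB : C = B
    · exact ⟨C₁, hCB ▸ hB C₁ hC₁⟩
    · obtain ⟨C', -, h⟩ := hfam.2.2.2.1 C hCB
      exact ⟨C', h⟩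
  rw [hw.kappa_eq_of_children hax hP hT hI hnl hfam fun C hC => Or.inr (not_not.1 hC ▸ hB),
    hw.kappa_mul_last_child hax hP hT hI hnl B hB hC₁,
    shuffleVal_of_nontrivial _ (hT.nontrivial_of_setLT (hB C₁ hC₁)), mulLeast_of_not hnoMin]

theorem eq_of_eta_children_first_last (A B : Child T I) (hAB : A ≠ B)
    (hA : ∀ C : Child T I, C ≠ A → SetLT A.1 C.1) (hB : ∀ C : Child T I, C ≠ B → SetLT C.1 B.1)
    (hfam : IsEtaFamilyOn (fun J K : Child T I => SetLT J.1 K.1)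
      (fun J => shuffleVal u (kappa P) J.1) {C | C ≠ A ∧ C ≠ B} P') :
    shuffleVal u (kappa P) A.1 * kappa P' * shuffleVal u (kappa P) B.1 =
      shuffleVal u (kappa P) I := by
  have hout : ∀ C ∉ {C | C ≠ A ∧ C ≠ B},
      (∀ J, J ≠ C → SetLT C.1 J.1) ∨ (∀ J, J ≠ C → SetLT J.1 C.1) := fun C hC => by
    rcases not_and_or.1 hC with hCA | hCB
    exacts [Or.inl (not_not.1 hCA ▸ hA), Or.inr (not_not.1 hCB ▸ hB)]
  rw [hw.kappa_eq_of_children hax hP hT hI hnl hfam hout,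
    hw.first_child_mul_kappa hax hP hT hI hnl A hA hAB.symm, ← mulLeast_mul,
    hw.kappa_mul_last_child hax hP hT hI hnl B hB hAB,
    shuffleVal_of_nontrivial _ (hT.nontrivial_of_setLT (hA B hAB.symm))]

end IsShuffleWord

end ShuffleNode

section ShuffleRoot

variable [LinearOrder α] [Semigroup S] {tau taustar : S → S} {kappa : Set S → S} {u : α → S}
  {P : Set S} {T : Set (Set α)}

theorem IsCondTreeOn.isPi0HatCompatible_shuffleVal (hT : IsCondTreeOn (univ : Set α) T)
    (hw : IsShuffleWord u P) (hax : PlusAlgAxioms (· * ·) tau taustar kappa) (hP : P.Nonempty) :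
    IsPi0HatCompatible tau taustar kappa T (shuffleVal u (kappa P)) := by
  intro I hI hnl v hrel
  rcases hrel with ⟨n, g, hlt, hsurj, rfl⟩ | ⟨g, hlt, hsurj, b, hb, rfl⟩ |
    ⟨g, hlt, hsurj, b, hb, rfl⟩ | ⟨P', -, ⟨hfam, rfl⟩ | ⟨A, hA, hfam, rfl⟩ | ⟨B, hB, hfam, rfl⟩ |
      ⟨A, B, hAB, hA, hB, hfam, rfl⟩⟩
  · exact hT.foldl_children_eq hI hnl (hw.isConcatMul_shuffleVal hax hP) g hlt hsurj
  · exact hw.eq_of_omega_children hax hP hT hI hnl g hlt hsurj hb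
  · exact hw.eq_of_omegaStar_children hax hP hT hI hnl g hlt hsurj hb
  · exact hw.eq_of_eta_children hax hP hT hI hnl hfam
  · exact hw.eq_of_eta_children_first hax hP hT hI hnl A hA hfam
  · exact hw.eq_of_eta_children_last hax hP hT hI hnl B hB hfam
  · exact hw.eq_of_eta_children_first_last hax hP hT hI hnl A B hAB hA hB hfam

theorem isShuffleWord_and_shuffleVal_univ_eq (hP : P.Nonempty) {a : S}
    (ha : (IsEtaFamilyOn (fun x y : α => x < y) u univ P ∧ a = kappa P) ∨
      (∃ x₀, (∀ y, y ≠ x₀ → x₀ < y) ∧ IsEtaFamilyOn (fun x y : α => x < y) u {y | y ≠ x₀} P ∧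
        a = u x₀ * kappa P) ∨
      (∃ x₁, (∀ y, y ≠ x₁ → y < x₁) ∧ IsEtaFamilyOn (fun x y : α => x < y) u {y | y ≠ x₁} P ∧
        a = kappa P * u x₁) ∨
      (∃ x₀ x₁, x₀ ≠ x₁ ∧ (∀ y, y ≠ x₀ → x₀ < y) ∧ (∀ y, y ≠ x₁ → y < x₁) ∧
        IsEtaFamilyOn (fun x y : α => x < y) u {y | y ≠ x₀ ∧ y ≠ x₁} P ∧
        a = u x₀ * kappa P * u x₁)) :
    IsShuffleWord u P ∧ shuffleVal u (kappa P) univ = a := by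
  have hnt : ∀ {x y : α}, x < y → (univ : Set α).Nontrivial := fun h =>
    Set.nontrivial_of_lt (mem_univ _) (mem_univ _) h
  have hleast : ∀ x₀ : α, (∀ y, y ≠ x₀ → x₀ < y) → IsLeast univ x₀ := fun x₀ h =>
    ⟨trivial, fun y _ => (eq_or_ne y x₀).elim (·.ge) fun hy => (h y hy).le⟩
  have hgreatest : ∀ x₁ : α, (∀ y, y ≠ x₁ → y < x₁) → IsGreatest univ x₁ := fun x₁ h =>
    ⟨trivial, fun y _ => (eq_or_ne y x₁).elim (·.le) fun hy => (h y hy).le⟩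
  have hnoLeast : (∀ x : α, ∃ y, y < x) → ∀ m, ¬ IsLeast (univ : Set α) m := fun h m hm =>
    let ⟨y, hy⟩ := h m; (hm.2 trivial).not_gt hy
  have hnoGreatest : (∀ x : α, ∃ y, x < y) → ∀ M, ¬ IsGreatest (univ : Set α) M := fun h M hM =>
    let ⟨y, hy⟩ := h M; (hM.2 trivial).not_gt hy
  rcases ha with ⟨hfam, rfl⟩ | ⟨x₀, hx₀, hfam, rfl⟩ | ⟨x₁, hx₁, hfam, rfl⟩ |
    ⟨x₀, x₁, hne, hx₀, hx₁, hfam, rfl⟩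
  · obtain ⟨x, -⟩ := hfam.1
    obtain ⟨y, -, hxy⟩ := hfam.2.2.1 x trivial
    refine ⟨hfam.isShuffleWord hP fun x hx => absurd trivial hx, ?_⟩
    rw [shuffleVal_of_nontrivial _ (hnt hxy),
      mulLeast_of_not (hnoLeast fun x => let ⟨y, _, h⟩ := hfam.2.2.2.1 x trivial; ⟨y, h⟩),
      mulGreatest_of_not (hnoGreatest fun x => let ⟨y, _, h⟩ := hfam.2.2.1 x trivial; ⟨y, h⟩)]
  · obtain ⟨y, hy⟩ := hfam.1
    refine ⟨hfam.isShuffleWord hP fun x hx => Or.inl (not_not.1 hx ▸ hx₀), ?_⟩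
    rw [shuffleVal_of_nontrivial _ (hnt (hx₀ y hy)),
      mulLeast_of_isLeast (hleast x₀ hx₀), mulGreatest_of_not (hnoGreatest fun x => ?_)]
    rcases eq_or_ne x x₀ with rfl | hx
    exacts [⟨y, hx₀ y hy⟩, let ⟨z, _, h⟩ := hfam.2.2.1 x hx; ⟨z, h⟩]
  · obtain ⟨y, hy⟩ := hfam.1
    refine ⟨hfam.isShuffleWord hP fun x hx => Or.inr (not_not.1 hx ▸ hx₁), ?_⟩
    rw [shuffleVal_of_nontrivial _ (hnt (hx₁ y hy)),
      mulGreatest_of_isGreatest (hgreatest x₁ hx₁), mulLeast_of_not (hnoLeast fun x => ?_)]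
    rcases eq_or_ne x x₁ with rfl | hx
    exacts [⟨y, hx₁ y hy⟩, let ⟨z, _, h⟩ := hfam.2.2.2.1 x hx; ⟨z, h⟩]
  · refine ⟨hfam.isShuffleWord hP fun x hx => ?_, ?_⟩
    · rcases not_and_or.1 hx with hx | hx
      exacts [Or.inl (not_not.1 hx ▸ hx₀), Or.inr (not_not.1 hx ▸ hx₁)]
    rw [shuffleVal_of_nontrivial _ (hnt (hx₀ x₁ hne.symm)),
      mulLeast_of_isLeast (hleast x₀ hx₀), mulGreatest_of_isGreatest (hgreatest x₁ hx₁),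
      mul_assoc]

end ShuffleRoot

section RootValues

variable [LinearOrder α] [Semigroup S] {tau taustar : S → S} {kappa : Set S → S} {u : α → S}
  {T : Set (Set α)} {γ : Set α → S} (h : IsEvalTreeHat (· * ·) tau taustar kappa u univ T γ)
include h

theorem IsEvalTreeHat.root_eq_of_finite {n : ℕ} (g : Fin (n + 1) → α)
    (hg : ∀ i j, i < j → g i < g j) (hgs : ∀ x, ∃ i, g i = x) :
    γ univ = List.foldl (· * ·) (u (g 0)) (List.ofFn fun i : Fin n => u (g i.succ)) := by
  have : Finite α := Finite.of_surjective g hgs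
  have : Nonempty α := ⟨g 0⟩
  have huniv : (⋃ i, ({g i} : Set α)) = univ := eq_univ_of_forall fun x =>
    let ⟨i, hi⟩ := hgs x; mem_iUnion.2 ⟨i, hi.symm⟩
  have hfold := (isConcatMul_finProd (u := u)).foldl_eq_iUnion (fun i => {g i})
    (fun i => singleton_nonempty _) (fun i j hij => by simpa [SetLT] using hg i j hij)
    (huniv ▸ ordConnected_univ)
  simp only [finProd_singleton, huniv] at hfold
  rw [h.eq_of_compatible finProd_singleton h.tree.isPi0HatCompatible_finProd univ h.tree.root_mem,
    hfold]

theorem IsEvalTreeHat.root_eq_of_shuffle {P : Set S} (hw : IsShuffleWord u P)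
    (hax : PlusAlgAxioms (· * ·) tau taustar kappa) (hP : P.Nonempty) :
    γ univ = shuffleVal u (kappa P) univ :=
  h.eq_of_compatible (shuffleVal_singleton _) (h.tree.isPi0HatCompatible_shuffleVal hw hax hP)
    univ h.tree.root_mem

variable {g : ℕ → α} {b : S} (hax : PlusAlgAxioms (· * ·) tau taustar kappa)
  (hgs : Function.Surjective g) (hb : ∀ n, 0 < n → u (g n) = b)
include hax hgs hb

theorem IsEvalTreeHat.root_eq_of_omega (hg : StrictMono g) : γ univ = u (g 0) * tau b := by
  have : Nonempty α := ⟨g 0⟩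
  have : Infinite α := .of_injective g hg.injective
  have hb' : ∀ x, x ≠ g 0 → u x = b := fun x hx => by
    obtain ⟨n, rfl⟩ := hgs x
    exact hb n (Nat.pos_of_ne_zero fun hn => hx (hn ▸ rfl))
  rw [h.eq_of_compatible omegaVal_singleton (h.tree.isPi0HatCompatible_omegaVal hg hgs hax hb')
    univ h.tree.root_mem, omegaVal, if_neg infinite_univ, if_pos (mem_univ _)]

theorem IsEvalTreeHat.root_eq_of_omegaStar (hg : StrictAnti g) :
    γ univ = taustar b * u (g 0) := by
  have : Nonempty α := ⟨g 0⟩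
  have : Infinite α := .of_injective g hg.injective
  have hb' : ∀ x, x ≠ g 0 → u x = b := fun x hx => by
    obtain ⟨n, rfl⟩ := hgs x
    exact hb n (Nat.pos_of_ne_zero fun hn => hx (hn ▸ rfl))
  rw [h.eq_of_compatible omegaStarVal_singleton
    (h.tree.isPi0HatCompatible_omegaStarVal hg hgs hax hb') univ h.tree.root_mem, omegaStarVal,
    if_neg infinite_univ, if_pos (mem_univ _)]

end RootValues

theorem evaluation_tree_value_eq_pi0hat_general {S α : Type} [LinearOrder α]
    (mul : S → S → S) (tau taustar : S → S)
    (kappa : Set S → S) (hax : PlusAlgAxioms mul tau taustar kappa)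
    (u : α → S) (a : S)
    (ha : Pi0HatRel mul tau taustar kappa (fun x y : α => x < y) u a)
    (T : Set (Set α)) (γ : Set α → S)
    (h : IsEvalTreeHat mul tau taustar kappa u Set.univ T γ) :
    γ Set.univ = a := by
  let _ : Semigroup S := { mul := mul, mul_assoc := hax.1 }
  rcases ha with ⟨n, g, hg, hgs, rfl⟩ | ⟨g, hg, hgs, b, hb, rfl⟩ | ⟨g, hg, hgs, b, hb, rfl⟩ |
    ⟨P, hP, hshuffle⟩
  · exact h.root_eq_of_finite g hg hgs
  · exact h.root_eq_of_omega hax hgs hb hg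
  · exact h.root_eq_of_omegaStar hax hgs hb hg
  · obtain ⟨hw, hval⟩ := isShuffleWord_and_shuffleVal_univ_eq hP hshuffle
    exact hval ▸ h.root_eq_of_shuffle hw hax hP

/-- let `(S, ·, τ, τ*, κ)` be a finite ⊕-algebra and let `u` be a
nonempty countable word over `S` such that `π₀^(u)` is defined (with value
`a`).  Then every evaluation tree `(T, γ)` with respect to `π₀^` over `u`
satisfies `γ(α) = π₀^(u)`. -/
theorem evaluation_tree_value_eq_pi0hat {S α : Type} [Finite S] [LinearOrder α]
    [Countable α] [Nonempty α] (mul : S → S → S) (tau taustar : S → S)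
    (kappa : Set S → S) (hax : PlusAlgAxioms mul tau taustar kappa)
    (u : α → S) (a : S)
    (ha : Pi0HatRel mul tau taustar kappa (fun x y : α => x < y) u a)
    (T : Set (Set α)) (γ : Set α → S)
    (h : IsEvalTreeHat mul tau taustar kappa u Set.univ T γ) :
    γ Set.univ = a :=
  evaluation_tree_value_eq_pi0hat_general mul tau taustar kappa hax u a ha T γ h
end

section
/- For every finite semigroup (M,·), every linear order α, and every additive labelling σ from α to M, there exists a split g : α → {1,…,n} of height n at most 2|M| that is Ramseian for σ. -/
/-!
Colcombet's argument, with Green's relations taken in the monoid `WithOne M`. By induction on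
the number `n` of elements that are `J`-equivalent to a label of `X`, `X` has a Ramseian split of
height `max 1 (2 n)`. Fix a `J`-minimal label `v`, with a `J`-class of size `c`, and call `x < y`
far when `σ x y` is `J`-equivalent to `v`; by minimality, an interval containing a far interval is
far.

If all pairs are far, put a pivot `p` on level `c + 1` and colour each `x < p` by `σ x p` together
with the `L`-class of the labels ending at `x` (dually above `p`). Green's lemma leaves at most `c`
colours, and for `x < y` of one colour, `σ x y` is an idempotent of a fixed `H`-class, hence fixed.

Otherwise, take a maximal set `W` of pairwise far points and split it as above on the top
`2 c - 1` levels (one level if `c = 1` and `v` is idempotent). Cut the other points into blocks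
that lie in one gap of `W` and agree on whether some point of `W` to their left is not far from
them. Blocks contain no far pair, so they have splits of height `2 (n - c)` by induction, and one
more level, taken by cofinal neighbours of the blocks of the first kind, separates the two blocks
of a gap. If `c = 1` and `v` is not idempotent, far pairs cannot touch, and the same scheme works
with `W` empty, cutting `X` at the right ends of the far pairs.
-/

/-- `x` and `y` are neighbours for the split `g`: `g x = g y` and `g z ≤ g x`
for every `z` lying between `x` and `y` (inclusive). -/
def Neighbour {α : Type} [LinearOrder α] (g : α → ℕ) (x y : α) : Prop :=
  g x = g y ∧ ∀ z : α, min x y ≤ z → z ≤ max x y → g z ≤ g x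

/-- The split `g` is Ramseian for the additive labelling `σ`: on every
equivalence class of the neighbourhood relation, `σ` is constant with an
idempotent value. -/
def IsRamseian {α M : Type} [LinearOrder α] (mul : M → M → M) (g : α → ℕ)
    (σ : α → α → M) : Prop :=
  ∀ x₀ : α, ∃ e : M, mul e e = e ∧
    ∀ x y : α, Neighbour g x₀ x → Neighbour g x₀ y → x < y → σ x y = e

open Set MulOpposite OrderDual

theorem exists_isIdempotentElem_pow_succ {N : Type*} [Monoid N] [Finite N] (c : N) :
    ∃ n, IsIdempotentElem (c ^ (n + 1)) := by
  let : TopologicalSpace N := ⊥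
  have : DiscreteTopology N := ⟨rfl⟩
  obtain ⟨_, ⟨n, rfl⟩, h⟩ := exists_idempotent_in_compact_subsemigroup
    (fun _ => continuous_of_discreteTopology) (range fun n : ℕ => c ^ (n + 1))
    (range_nonempty _) (toFinite _).isCompact
    (by rintro _ ⟨m, rfl⟩ _ ⟨n, rfl⟩; exact ⟨m + n + 1, by rw [← pow_add]; ring_nf⟩)
  exact ⟨n, h⟩

theorem exists_levels {α β : Type*} {Y : Set α} {C : Set β} (hC : C.Finite) {col : α → β}
    (hcol : MapsTo col Y C) : ∃ lev : α → ℕ, MapsTo lev Y (Icc 1 C.ncard) ∧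
      ∀ x ∈ Y, ∀ y ∈ Y, lev x = lev y → col x = col y := by
  classical
  let e := hC.toFinset.equivFin
  have hmem : ∀ x ∈ Y, col x ∈ hC.toFinset := fun x hx => hC.mem_toFinset.2 (hcol hx)
  refine ⟨fun x => if h : col x ∈ hC.toFinset then e ⟨col x, h⟩ + 1 else 0,
    fun x hx => ?_, fun x hx y hy hxy => ?_⟩
  · dsimp only
    rw [dif_pos (hmem x hx), ncard_eq_toFinset_card C hC]
    exact ⟨Nat.le_add_left _ _, (e _).isLt⟩
  · simp only [dif_pos (hmem x hx), dif_pos (hmem y hy), add_left_inj, Fin.val_inj,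
      e.apply_eq_iff_eq, Subtype.mk.injEq] at hxy
    exact hxy

namespace Green

variable {N : Type*} [Monoid N]

def RLE (a b : N) : Prop := ∃ u, a = b * u
def LLE (a b : N) : Prop := ∃ u, a = u * b
def JLE (a b : N) : Prop := ∃ u v, a = u * b * v

def REquiv (a b : N) : Prop := RLE a b ∧ RLE b a
def LEquiv (a b : N) : Prop := LLE a b ∧ LLE b a
def JEquiv (a b : N) : Prop := JLE a b ∧ JLE b a

def lClass (a : N) : Set N := {b | LEquiv b a}
def jClass (a : N) : Set N := {b | JEquiv b a}

variable {a b c : N}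

theorem RLE.refl (a : N) : RLE a a := ⟨1, (mul_one a).symm⟩
theorem LLE.refl (a : N) : LLE a a := ⟨1, (one_mul a).symm⟩
theorem JLE.refl (a : N) : JLE a a := ⟨1, 1, by simp⟩

theorem RLE.trans : RLE a b → RLE b c → RLE a c := by
  rintro ⟨u, rfl⟩ ⟨v, rfl⟩; exact ⟨v * u, by rw [mul_assoc]⟩
theorem LLE.trans : LLE a b → LLE b c → LLE a c := by
  rintro ⟨u, rfl⟩ ⟨v, rfl⟩; exact ⟨u * v, by rw [mul_assoc]⟩
theorem JLE.trans : JLE a b → JLE b c → JLE a c := by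
  rintro ⟨u, v, rfl⟩ ⟨u', v', rfl⟩; exact ⟨u * u', v' * v, by simp only [mul_assoc]⟩

theorem rLE_mul_right (a b : N) : RLE (a * b) a := ⟨b, rfl⟩

theorem RLE.jLE : RLE a b → JLE a b := by rintro ⟨u, rfl⟩; exact ⟨1, u, by rw [one_mul]⟩
theorem LLE.jLE : LLE a b → JLE a b := by rintro ⟨u, rfl⟩; exact ⟨u, 1, by rw [mul_one]⟩

theorem LEquiv.refl (a : N) : LEquiv a a := ⟨LLE.refl a, LLE.refl a⟩
theorem JEquiv.refl (a : N) : JEquiv a a := ⟨JLE.refl a, JLE.refl a⟩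
theorem LEquiv.symm (h : LEquiv a b) : LEquiv b a := ⟨h.2, h.1⟩
theorem JEquiv.symm (h : JEquiv a b) : JEquiv b a := ⟨h.2, h.1⟩
theorem LEquiv.trans (h : LEquiv a b) (h' : LEquiv b c) : LEquiv a c :=
  ⟨h.1.trans h'.1, h'.2.trans h.2⟩
theorem JEquiv.trans (h : JEquiv a b) (h' : JEquiv b c) : JEquiv a c :=
  ⟨h.1.trans h'.1, h'.2.trans h.2⟩
theorem LEquiv.jEquiv (h : LEquiv a b) : JEquiv a b := ⟨h.1.jLE, h.2.jLE⟩

theorem rLE_op : RLE (op a) (op b) ↔ LLE a b :=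
  ⟨fun ⟨u, h⟩ => ⟨unop u, op_injective h⟩, fun ⟨u, h⟩ => ⟨op u, unop_injective h⟩⟩
theorem jLE_op : JLE (op a) (op b) ↔ JLE a b := by
  refine ⟨fun ⟨u, v, h⟩ => ⟨unop v, unop u, op_injective ?_⟩,
    fun ⟨u, v, h⟩ => ⟨op v, op u, unop_injective ?_⟩⟩ <;> simp [h, mul_assoc]
theorem jEquiv_op : JEquiv (op a) (op b) ↔ JEquiv a b := and_congr jLE_op jLE_op

theorem ncard_jClass_op [Finite N] (a : N) : (jClass (op a)).ncard = (jClass a).ncard := by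
  rw [← ncard_image_of_injective _ unop_injective]
  congr 1
  ext b
  simp [jClass, ← jEquiv_op (a := b)]

/-- Finite monoids are stable. -/
theorem rLE_of_jLE_mul [Finite N] (h : JLE a (a * b)) : RLE a (a * b) := by
  obtain ⟨u, v, hauv⟩ := h
  have hpow : ∀ n, a = u ^ n * a * (b * v) ^ n := by
    intro n
    induction n with
    | zero => simp
    | succ n ih =>
      rw [pow_succ u, pow_succ' (b * v)]
      calc a = u ^ n * a * (b * v) ^ n := ih
        _ = u ^ n * (u * (a * b) * v) * (b * v) ^ n := by rw [← hauv]
        _ = u ^ n * u * a * ((b * v) * (b * v) ^ n) := by simp only [mul_assoc]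
  obtain ⟨n, he⟩ := exists_isIdempotentElem_pow_succ (b * v)
  have hae : a * (b * v) ^ (n + 1) = a := by
    conv_rhs => rw [hpow (n + 1)]
    conv_lhs => rw [hpow (n + 1), mul_assoc _ _ ((b * v) ^ (n + 1)), he.eq]
  refine ⟨v * (b * v) ^ n, ?_⟩
  calc a = a * (b * v) ^ (n + 1) := hae.symm
    _ = a * b * (v * (b * v) ^ n) := by rw [pow_succ']; simp only [mul_assoc]

theorem lLE_of_jLE_mul [Finite N] (h : JLE b (a * b)) : LLE b (a * b) := by
  have : Finite Nᵐᵒᵖ := Finite.of_equiv N opEquiv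
  rw [← rLE_op, op_mul]
  refine rLE_of_jLE_mul ?_
  rwa [← op_mul, jLE_op]

theorem isIdempotentElem_and_rEquiv_of_mul_eq [Finite N] {s m : N} (hfix : s * m = m)
    (h : JEquiv s m) : IsIdempotentElem s ∧ REquiv s m := by
  have hR : RLE s m := by
    have := rLE_of_jLE_mul (a := s) (b := m) (by rw [hfix]; exact h.1)
    rwa [hfix] at this
  obtain ⟨u, hu⟩ := hR
  refine ⟨?_, ⟨u, hu⟩, m, hfix.symm⟩
  calc s * s = s * m * u := by rw [mul_assoc, ← hu]
    _ = s := by rw [hfix, hu]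

theorem eq_of_isIdempotentElem {e f : N} (he : IsIdempotentElem e) (hf : IsIdempotentElem f)
    (hR : RLE e f) (hL : LLE f e) : e = f := by
  obtain ⟨u, hu⟩ := hR
  obtain ⟨v, hv⟩ := hL
  calc e = f * e := by rw [hu, ← mul_assoc, hf.eq]
    _ = f := by rw [hv, mul_assoc, he.eq]

theorem lClass_eq_of_mem {t : N} (h : a ∈ lClass t) : lClass a = lClass t := by
  ext b
  exact ⟨fun hb => LEquiv.trans hb h, fun hb => LEquiv.trans hb (LEquiv.symm h)⟩

theorem lClass_subset_jClass {t : N} (ht : t ∈ jClass c) : lClass t ⊆ jClass c :=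
  fun _ hb => hb.jEquiv.trans ht

/-- Green's lemma. -/
theorem exists_mul_right_injOn [Finite N] {m₀ t : N} (h : JEquiv m₀ t) :
    ∃ u u', (∀ m ∈ lClass m₀, m * u ∈ lClass t) ∧ ∀ m ∈ lClass m₀, m * u * u' = m := by
  obtain ⟨x, y, hxy⟩ := h.2
  have hJ : JLE m₀ (m₀ * y) := h.1.trans ⟨x, 1, by rw [hxy, mul_one, mul_assoc]⟩
  obtain ⟨u', hu'⟩ := rLE_of_jLE_mul hJ
  have hL : LLE (m₀ * y) t := by
    have := lLE_of_jLE_mul (a := x) (b := m₀ * y)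
      (by rw [← mul_assoc, ← hxy]; exact (rLE_mul_right m₀ y).jLE.trans h.1)
    rwa [← mul_assoc, ← hxy] at this
  refine ⟨y, u', fun m hm => ?_, fun m hm => ?_⟩
  · obtain ⟨⟨v, hv⟩, ⟨w, hw⟩⟩ := hm
    have hmy : LEquiv (m * y) (m₀ * y) :=
      ⟨⟨v, by rw [hv, mul_assoc]⟩, ⟨w, by rw [hw, mul_assoc]⟩⟩
    exact hmy.trans ⟨hL, x, by rw [hxy, mul_assoc]⟩
  · obtain ⟨v, hv⟩ := hm.1
    calc m * y * u' = v * (m₀ * y * u') := by rw [hv]; simp only [mul_assoc]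
      _ = m := by rw [← hu', hv]

theorem ncard_prod_lClass_le [Finite N] {m₀ z : N} (hm₀ : JEquiv m₀ z) :
    (lClass m₀ ×ˢ (lClass '' jClass z)).ncard ≤ (jClass z).ncard := by
  have key : ∀ ℓ ∈ lClass '' jClass z, ∃ u u', (∀ m ∈ lClass m₀, m * u ∈ ℓ) ∧
      ∀ m ∈ lClass m₀, m * u * u' = m := by
    rintro _ ⟨t, ht, rfl⟩
    exact exists_mul_right_injOn (hm₀.trans (JEquiv.symm ht))
  choose! u u' hu hu' using key
  refine ncard_le_ncard_of_injOn (fun q => q.1 * u q.2) ?_ ?_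
  · rintro ⟨m, ℓ⟩ ⟨hm, hℓ⟩
    obtain ⟨t, ht, rfl⟩ := hℓ
    exact lClass_subset_jClass ht (hu _ ⟨t, ht, rfl⟩ m hm)
  · rintro ⟨m, ℓ⟩ ⟨hm, hℓ⟩ ⟨m', ℓ'⟩ ⟨hm', hℓ'⟩ (heq : m * u ℓ = m' * u ℓ')
    have hℓℓ' : ℓ = ℓ' := by
      obtain ⟨t, ht, rfl⟩ := id hℓ
      obtain ⟨t', ht', rfl⟩ := id hℓ'
      rw [← lClass_eq_of_mem (hu _ hℓ m hm), heq, lClass_eq_of_mem (hu _ hℓ' m' hm')]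
    subst hℓℓ'
    rw [← hu' ℓ hℓ m hm, heq, hu' ℓ hℓ m' hm']

theorem exists_jMinimal [Finite N] {V : Set N} (hV : V.Nonempty) :
    ∃ v ∈ V, ∀ u ∈ V, JLE u v → JLE v u := by
  obtain ⟨v, hv, hmin⟩ := exists_min_image V (fun v => {m | JLE m v}.ncard) V.toFinite hV
  refine ⟨v, hv, fun u hu huv => ?_⟩
  have hideal : {m | JLE m u} = {m | JLE m v} :=
    eq_of_subset_of_ncard_le (fun m hm => JLE.trans hm huv) (hmin u hu)
  exact (hideal ▸ JLE.refl v : v ∈ {m | JLE m u})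

theorem one_le_ncard_jClass [Finite N] (v : N) : 1 ≤ (jClass v).ncard :=
  (ncard_pos (toFinite _)).2 ⟨v, JEquiv.refl v⟩

theorem JEquiv.eq_of_ncard_jClass_eq_one {m v : N} (h : JEquiv m v) (hc : (jClass v).ncard = 1) :
    m = v := by
  obtain ⟨w, hw⟩ := ncard_eq_one.1 hc
  have hm : m ∈ jClass v := h
  have hv : v ∈ jClass v := JEquiv.refl v
  rw [hw, mem_singleton_iff] at hm hv
  rw [hm, hv]

end Green

open Green

section Labelling

variable {α N : Type*} [LinearOrder α] [Monoid N]

def IsAdditiveLabelling (σ : α → α → N) : Prop :=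
  ∀ x y z, x < y → y < z → σ x y * σ y z = σ x z

def dualLabelling (σ : α → α → N) : αᵒᵈ → αᵒᵈ → Nᵐᵒᵖ :=
  fun x y => op (σ (ofDual y) (ofDual x))

variable {σ : α → α → N}

theorem IsAdditiveLabelling.dual (hσ : IsAdditiveLabelling σ) :
    IsAdditiveLabelling (dualLabelling σ) :=
  fun _ _ _ hxy hyz => by
    simp only [dualLabelling, ← op_mul]
    exact congrArg op (hσ _ _ _ hyz hxy)

theorem IsAdditiveLabelling.lLE {x' x y : α} (hσ : IsAdditiveLabelling σ) (hx : x' ≤ x)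
    (hxy : x < y) : LLE (σ x' y) (σ x y) := by
  rcases hx.eq_or_lt with rfl | hx
  · exact LLE.refl _
  · exact ⟨σ x' x, (hσ _ _ _ hx hxy).symm⟩

theorem IsAdditiveLabelling.rLE {x y y' : α} (hσ : IsAdditiveLabelling σ) (hxy : x < y)
    (hy : y ≤ y') : RLE (σ x y') (σ x y) := by
  rcases hy.eq_or_lt with rfl | hy
  · exact RLE.refl _
  · exact ⟨σ y y', (hσ _ _ _ hxy hy).symm⟩

theorem IsAdditiveLabelling.jLE {x' x y y' : α} (hσ : IsAdditiveLabelling σ) (hx : x' ≤ x)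
    (hxy : x < y) (hy : y ≤ y') : JLE (σ x' y') (σ x y) :=
  (hσ.lLE hx (hxy.trans_le hy)).jLE.trans (hσ.rLE hxy hy).jLE

theorem IsAdditiveLabelling.lEquiv [Finite N] (hσ : IsAdditiveLabelling σ) {X : Set α} {z : N}
    (hX : ∀ x ∈ X, ∀ y ∈ X, x < y → JEquiv (σ x y) z) {w w' x : α} (hw : w ∈ X) (hw' : w' ∈ X)
    (hx : x ∈ X) (hwx : w < x) (hw'x : w' < x) : LEquiv (σ w x) (σ w' x) := by
  wlog hle : w ≤ w' generalizing w w'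
  · exact (this hw' hw hw'x hwx (le_of_not_ge hle)).symm
  refine ⟨hσ.lLE hle hw'x, ?_⟩
  rcases hle.eq_or_lt with rfl | hlt
  · exact LLE.refl _
  · rw [← hσ _ _ _ hlt hw'x]
    refine lLE_of_jLE_mul ?_
    rw [hσ _ _ _ hlt hw'x]
    exact ((hX _ hw' _ hx hw'x).trans (hX _ hw _ hx hwx).symm).1

end Labelling

section Splits

variable {α N : Type*} [LinearOrder α] [Monoid N] {σ : α → α → N}

def IsHomogeneous (σ : α → α → N) (C : Set α) : Prop :=
  ∃ e, IsIdempotentElem e ∧ ∀ x ∈ C, ∀ y ∈ C, x < y → σ x y = e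

def neighbourClass (X : Set α) (g : α → ℕ) (x : α) : Set α :=
  {y ∈ X | g y = g x ∧ ∀ z ∈ X, z ∈ uIcc x y → g z ≤ g x}

def RamseianOn (σ : α → α → N) (X : Set α) (g : α → ℕ) : Prop :=
  ∀ x ∈ X, IsHomogeneous σ (neighbourClass X g x)

variable {C C' X P : Set α} {g g' : α → ℕ} {x : α}

theorem IsHomogeneous.mono (h : IsHomogeneous σ C) (hC : C' ⊆ C) : IsHomogeneous σ C' :=
  let ⟨e, he, hCe⟩ := h
  ⟨e, he, fun x hx y hy => hCe x (hC hx) y (hC hy)⟩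

theorem Set.Subsingleton.isHomogeneous (hC : C.Subsingleton) : IsHomogeneous σ C :=
  ⟨1, .one, fun _ hx _ hy hxy => absurd (hC hx hy) hxy.ne⟩

theorem isHomogeneous_of_forall
    (h : ∀ x ∈ C, ∀ y ∈ C, ∀ x' ∈ C, ∀ y' ∈ C, x < y → x' < y' →
      IsIdempotentElem (σ x y) ∧ σ x' y' = σ x y) : IsHomogeneous σ C := by
  by_cases hpair : ∃ x ∈ C, ∃ y ∈ C, x < y
  · obtain ⟨x, hx, y, hy, hxy⟩ := hpair
    exact ⟨σ x y, (h x hx y hy x hx y hy hxy hxy).1,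
      fun x' hx' y' hy' hxy' => (h x hx y hy x' hx' y' hy' hxy hxy').2⟩
  · push Not at hpair
    exact ⟨1, .one, fun x hx y hy hxy => absurd hxy (not_lt.2 (hpair x hx y hy))⟩

theorem IsHomogeneous.of_dualLabelling {C : Set αᵒᵈ} (h : IsHomogeneous (dualLabelling σ) C) :
    IsHomogeneous σ (toDual ⁻¹' C) :=
  let ⟨e, he, hC⟩ := h
  ⟨unop e, by rw [IsIdempotentElem, ← unop_mul, he.eq],
    fun x hx y hy hxy => op_injective (hC (toDual y) hy (toDual x) hx hxy)⟩

theorem IsHomogeneous.ramseianOn (h : IsHomogeneous σ X) : RamseianOn σ X g :=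
  fun _ _ => h.mono fun _ hy => hy.1

theorem neighbourClass_const_add (k : ℕ) :
    neighbourClass X (fun y => k + g y) x = neighbourClass X g x := by
  simp [neighbourClass]

theorem RamseianOn.const_add (hram : RamseianOn σ X g) (k : ℕ) :
    RamseianOn σ X fun y => k + g y := by
  intro x hx
  rw [neighbourClass_const_add]
  exact hram x hx

theorem neighbourClass_subset_neighbourClass (hPX : P ⊆ X) (hg : EqOn g g' P) (hx : x ∈ P)
    (hsub : neighbourClass X g x ⊆ P) : neighbourClass X g x ⊆ neighbourClass P g' x := by
  intro y hy
  refine ⟨hsub hy, ?_, fun z hz hzxy => ?_⟩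
  · rw [← hg (hsub hy), ← hg hx]
    exact hy.2.1
  · rw [← hg hz, ← hg hx]
    exact hy.2.2 z (hPX hz) hzxy

theorem RamseianOn.isHomogeneous_neighbourClass (hram : RamseianOn σ P g') (hPX : P ⊆ X)
    (hg : EqOn g g' P) (hx : x ∈ P) (hsub : neighbourClass X g x ⊆ P) :
    IsHomogeneous σ (neighbourClass X g x) :=
  (hram x hx).mono (neighbourClass_subset_neighbourClass hPX hg hx hsub)

theorem exists_cofinal_subset_neighbourClass (S : Set α) {g : α → ℕ} {h : ℕ}
    (hg : ∀ x ∈ S, g x ≤ h) :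
    ∃ D ⊆ S, (∀ q ∈ S, ∃ d ∈ D, q ≤ d) ∧ ∀ d ∈ D, D ⊆ neighbourClass S g d := by
  classical
  rcases S.eq_empty_or_nonempty with rfl | ⟨s₀, hs₀⟩
  · exact ⟨∅, empty_subset _, fun _ hq => hq.elim, fun _ hd => hd.elim⟩
  have hB : ∃ ℓ, ∃ q ∈ S, ∀ w ∈ S, q ≤ w → g w ≤ ℓ := ⟨h, s₀, hs₀, fun w hw _ => hg w hw⟩
  obtain ⟨q₀, hq₀, hq₀m⟩ := Nat.find_spec hB
  refine ⟨{d ∈ S | q₀ ≤ d ∧ g d = Nat.find hB}, fun d hd => hd.1, fun q hq => ?_,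
    fun d hd d' hd' => ⟨hd'.1, hd'.2.2.trans hd.2.2.symm, fun z hz hzdd' => ?_⟩⟩
  · obtain ⟨q', hq', hqq', hq₀q'⟩ : ∃ q' ∈ S, q ≤ q' ∧ q₀ ≤ q' :=
      (le_total q q₀).elim (fun h => ⟨q₀, hq₀, h, le_rfl⟩) (fun h => ⟨q, hq, le_rfl, h⟩)
    by_contra hno
    push Not at hno
    have hlt : ∀ w ∈ S, q' ≤ w → g w < Nat.find hB := fun w hw hqw =>
      (hq₀m w hw (hq₀q'.trans hqw)).lt_of_ne fun hwm =>
        (hno w ⟨hw, hq₀q'.trans hqw, hwm⟩).not_ge (hqq'.trans hqw)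
    have hpos : 0 < Nat.find hB := (Nat.zero_le _).trans_lt (hlt q' hq' le_rfl)
    exact Nat.find_min hB (Nat.pred_lt hpos.ne')
      ⟨q', hq', fun w hw hqw => Nat.le_pred_of_lt (hlt w hw hqw)⟩
  · rw [hd.2.2]
    exact hq₀m z hz ((le_min hd.2.1 hd'.2.1).trans hzdd'.1)

theorem RamseianOn.exists_cofinal_top {S : Set α} {h : ℕ} (hram : RamseianOn σ S g)
    (hg : MapsTo g S (Icc 1 h)) : ∃ g', MapsTo g' S (Icc 1 (h + 1)) ∧ RamseianOn σ S g' ∧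
      ∀ q ∈ S, ∃ d ∈ S, q ≤ d ∧ g' d = h + 1 := by
  classical
  obtain ⟨D, hDS, hDcof, hDnb⟩ := exists_cofinal_subset_neighbourClass S fun x hx => (hg hx).2
  set g' := fun x => if x ∈ D then h + 1 else g x
  have hg'D : ∀ x ∈ D, g' x = h + 1 := fun x hx => if_pos hx
  have hg'N : ∀ x ∉ D, g' x = g x := fun x hx => if_neg hx
  have hlow : ∀ x ∈ S, g' x ≤ h → x ∉ D := fun x _ hx hxD => by
    rw [hg'D x hxD] at hx; omega
  refine ⟨g', fun x hx => ?_, fun x hx => (hram x hx).mono fun y hy => ?_, fun q hq => ?_⟩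
  · by_cases hxD : x ∈ D
    · rw [hg'D x hxD]; exact ⟨Nat.le_add_left _ _, le_rfl⟩
    · rw [hg'N x hxD]; exact ⟨(hg hx).1, (hg hx).2.trans h.le_succ⟩
  · by_cases hxD : x ∈ D
    · refine hDnb x hxD (by_contra fun hyD => ?_)
      have := (hg hy.1).2
      rw [← hg'N y hyD, hy.2.1, hg'D x hxD] at this
      omega
    · have hx' : g' x ≤ h := by rw [hg'N x hxD]; exact (hg hx).2
      refine ⟨hy.1, ?_, fun z hz hzxy => ?_⟩
      · rw [← hg'N x hxD, ← hg'N y (hlow y hy.1 (hy.2.1 ▸ hx')), hy.2.1]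
      · have hz' := hy.2.2 z hz hzxy
        have hzD := hlow z hz (hz'.trans hx')
        rwa [hg'N x hxD, hg'N z hzD] at hz'
  · obtain ⟨d, hd, hqd⟩ := hDcof q hq
    exact ⟨d, hDS hd, hqd, hg'D d hd⟩

end Splits

section Assembly

variable {α N : Type*} [LinearOrder α] [Monoid N] {σ : α → α → N}

def gapBlock (X W : Set α) (P : α → Prop) (z : α) : Set α :=
  {z' ∈ X | Disjoint W (uIcc z z') ∧ (P z' ↔ P z)}

variable {X W : Set α} {P : α → Prop}

theorem disjoint_uIcc_trans {a b c : α} (hab : Disjoint W (uIcc a b))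
    (hbc : Disjoint W (uIcc b c)) : Disjoint W (uIcc a c) :=
  (disjoint_union_right.2 ⟨hab, hbc⟩).mono_right uIcc_subset_uIcc_union_uIcc

theorem mem_gapBlock_self {z : α} (hz : z ∈ X) (hzW : z ∉ W) : z ∈ gapBlock X W P z :=
  ⟨hz, by rw [uIcc_self]; exact disjoint_singleton_right.2 hzW, Iff.rfl⟩

theorem gapBlock_eq {z z' : α} (h : z' ∈ gapBlock X W P z) :
    gapBlock X W P z' = gapBlock X W P z := by
  ext y
  exact ⟨fun hy => ⟨hy.1, disjoint_uIcc_trans h.2.1 hy.2.1, hy.2.2.trans h.2.2⟩,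
    fun hy => ⟨hy.1, disjoint_uIcc_trans (uIcc_comm z z' ▸ h.2.1) hy.2.1,
      hy.2.2.trans h.2.2.symm⟩⟩

theorem neighbourClass_subset_gapBlock {g : α → ℕ} {h : ℕ} (hWX : W ⊆ X)
    (hP : ∀ z ∈ X, ∀ z' ∈ X, Disjoint W (uIcc z z') → P z → ¬ P z' → z < z')
    (hhigh : ∀ w ∈ W, h + 1 < g w) (hlow : ∀ x ∈ X, x ∉ W → g x ≤ h + 1)
    (hnotP : ∀ x ∈ X, x ∉ W → ¬ P x → g x ≤ h)
    (htop : ∀ a ∈ X, a ∉ W → P a → ∃ d ∈ gapBlock X W P a, a ≤ d ∧ g d = h + 1)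
    {x : α} (hx : x ∈ X) (hxW : x ∉ W) : neighbourClass X g x ⊆ gapBlock X W P x := by
  rintro y ⟨hy, hgy, hbetween⟩
  have hgx := hlow x hx hxW
  have hyW : y ∉ W := fun hyW => by have := hhigh y hyW; omega
  have hdisj : Disjoint W (uIcc x y) := disjoint_left.2 fun w hw hwxy => by
    have := hbetween w (hWX hw) hwxy
    have := hhigh w hw
    omega
  have hsep : ∀ a ∈ X, a ∉ W → ∀ b ∈ X, Disjoint W (uIcc a b) → P a → ¬ P b →
      ∃ d ∈ X, d ∈ uIcc a b ∧ g d = h + 1 := by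
    intro a ha haW b hb hab hPa hPb
    obtain ⟨d, hd, had, hgd⟩ := htop a ha haW hPa
    have hdb := hP d hd.1 b hb (disjoint_uIcc_trans (uIcc_comm a d ▸ hd.2.1) hab) (hd.2.2.2 hPa) hPb
    exact ⟨d, hd.1, mem_uIcc_of_le had hdb.le, hgd⟩
  refine ⟨hy, hdisj, by_contra fun hne => ?_⟩
  by_cases hPx : P x
  · have hPy : ¬ P y := fun hPy => hne (iff_of_true hPy hPx)
    obtain ⟨d, hd, hdxy, hgd⟩ := hsep x hx hxW y hy hdisj hPx hPy
    have := hbetween d hd hdxy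
    have := hnotP y hy hyW hPy
    omega
  · have hPy : P y := by tauto
    obtain ⟨d, hd, hdyx, hgd⟩ := hsep y hy hyW x hx (uIcc_comm x y ▸ hdisj) hPy hPx
    have := hbetween d hd (uIcc_comm y x ▸ hdyx)
    have := hnotP x hx hxW hPx
    omega

theorem exists_gapBlock_splits {h : ℕ}
    (hblock : ∀ z ∈ X, z ∉ W → ∃ g, MapsTo g (gapBlock X W P z) (Icc 1 h) ∧
      RamseianOn σ (gapBlock X W P z) g) :
    ∃ gB : Set α → α → ℕ, ∀ z ∈ X, z ∉ W →
      MapsTo (gB (gapBlock X W P z)) (gapBlock X W P z) (Icc 1 (h + 1)) ∧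
      RamseianOn σ (gapBlock X W P z) (gB (gapBlock X W P z)) ∧
      (P z → ∃ d ∈ gapBlock X W P z, z ≤ d ∧ gB (gapBlock X W P z) d = h + 1) ∧
      (¬ P z → gB (gapBlock X W P z) z ≤ h) := by
  have hsplit : ∀ B : Set α, ∃ gB : α → ℕ, ∀ z ∈ X, z ∉ W → B = gapBlock X W P z →
      MapsTo gB B (Icc 1 (h + 1)) ∧ RamseianOn σ B gB ∧
      (P z → ∃ d ∈ B, z ≤ d ∧ gB d = h + 1) ∧ (¬ P z → gB z ≤ h) := by
    intro B
    by_cases hB : ∃ z₀ ∈ X, z₀ ∉ W ∧ B = gapBlock X W P z₀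
    · obtain ⟨z₀, hz₀, hz₀W, rfl⟩ := hB
      obtain ⟨g, hg, hram⟩ := hblock z₀ hz₀ hz₀W
      have hPz : ∀ z ∈ X, z ∉ W → gapBlock X W P z₀ = gapBlock X W P z → (P z ↔ P z₀) :=
        fun z hz hzW hB => ((hB ▸ mem_gapBlock_self hz hzW : z ∈ gapBlock X W P z₀)).2.2
      by_cases hPz₀ : P z₀
      · obtain ⟨g', hg', hram', htop⟩ := hram.exists_cofinal_top hg
        refine ⟨g', fun z hz hzW hB => ⟨hg', hram', fun _ => htop z ?_, fun hPz' => ?_⟩⟩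
        · exact hB ▸ mem_gapBlock_self hz hzW
        · exact (hPz' ((hPz z hz hzW hB).2 hPz₀)).elim
      · refine ⟨g, fun z hz hzW hB => ⟨hg.mono_right (Icc_subset_Icc_right h.le_succ), hram,
          fun hPz' => (hPz₀ ((hPz z hz hzW hB).1 hPz')).elim, fun _ => (hg ?_).2⟩⟩
        exact hB ▸ mem_gapBlock_self hz hzW
    · exact ⟨0, fun z hz hzW hBz => (hB ⟨z, hz, hzW, hBz⟩).elim⟩
  choose gB hgB using hsplit
  exact ⟨gB, fun z hz hzW => hgB _ z hz hzW rfl⟩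

theorem exists_ramseianOn_of_gapBlocks {h s : ℕ} (hWX : W ⊆ X)
    (hW : ∃ gW, MapsTo gW W (Icc 1 s) ∧ RamseianOn σ W gW)
    (hP : ∀ z ∈ X, ∀ z' ∈ X, Disjoint W (uIcc z z') → P z → ¬ P z' → z < z')
    (hblock : ∀ z ∈ X, z ∉ W → ∃ g, MapsTo g (gapBlock X W P z) (Icc 1 h) ∧
      RamseianOn σ (gapBlock X W P z) g) :
    ∃ g, MapsTo g X (Icc 1 (h + 1 + s)) ∧ RamseianOn σ X g := by
  classical
  obtain ⟨gW, hgW, hramW⟩ := hW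
  obtain ⟨gB, hgB⟩ := exists_gapBlock_splits hblock
  set g := fun x => if x ∈ W then h + 1 + gW x else gB (gapBlock X W P x) x
  have hgW' : ∀ x ∈ W, g x = h + 1 + gW x := fun x hx => if_pos hx
  have hgB' : ∀ z, ∀ x ∈ gapBlock X W P z, g x = gB (gapBlock X W P z) x := fun z x hx => by
    rw [← gapBlock_eq hx]
    exact if_neg fun hxW => disjoint_left.1 hx.2.1 hxW right_mem_uIcc
  have hlow : ∀ x ∈ X, x ∉ W → g x ∈ Icc 1 (h + 1) := fun x hx hxW => by
    rw [hgB' x x (mem_gapBlock_self hx hxW)]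
    exact (hgB x hx hxW).1 (mem_gapBlock_self hx hxW)
  have hhigh : ∀ x ∈ W, h + 1 < g x := fun x hx => by
    rw [hgW' x hx]
    have := (hgW hx).1
    omega
  refine ⟨g, fun x hx => ?_, fun x hx => ?_⟩
  · by_cases hxW : x ∈ W
    · rw [hgW' x hxW]
      obtain ⟨h1, h2⟩ := hgW hxW
      exact ⟨by omega, by omega⟩
    · obtain ⟨h1, h2⟩ := hlow x hx hxW
      exact ⟨h1, by omega⟩
  by_cases hxW : x ∈ W
  · refine (hramW.const_add (h + 1)).isHomogeneous_neighbourClass hWX hgW' hxW fun y hy => ?_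
    by_contra hyW
    have := (hlow y hy.1 hyW).2
    have := hhigh x hxW
    have := hy.2.1
    omega
  refine (hgB x hx hxW).2.1.isHomogeneous_neighbourClass (sep_subset _ _) (hgB' x)
    (mem_gapBlock_self hx hxW) (neighbourClass_subset_gapBlock hWX hP hhigh
      (fun y hy hyW => (hlow y hy hyW).2) (fun y hy hyW hPy => ?_) (fun a ha haW hPa => ?_) hx hxW)
  · rw [hgB' y y (mem_gapBlock_self hy hyW)]
    exact (hgB y hy hyW).2.2.2 hPy
  · obtain ⟨d, hd, had, hgd⟩ := (hgB a ha haW).2.2.1 hPa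
    exact ⟨d, hd, had, (hgB' a d hd).trans hgd⟩

end Assembly

section Far

variable {α N : Type*} [LinearOrder α] [Monoid N] {σ : α → α → N}

theorem exists_maximal_pairwise (X : Set α) (r : α → α → Prop) :
    ∃ W ⊆ X, (∀ x ∈ W, ∀ y ∈ W, x < y → r x y) ∧
      ∀ z ∈ X, z ∉ W → ∃ w ∈ W, (w < z ∧ ¬ r w z) ∨ (z < w ∧ ¬ r z w) := by
  let S : Set (Set α) := {W | W ⊆ X ∧ W.Pairwise fun x y => x < y → r x y}
  obtain ⟨W, -, hW⟩ := zorn_subset_nonempty S (fun c hcS hc _ =>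
    ⟨⋃₀ c, ⟨sUnion_subset fun s hs => (hcS hs).1,
      (pairwise_sUnion hc.directedOn).2 fun s hs => (hcS hs).2⟩,
      fun _ hs => subset_sUnion_of_mem hs⟩) ∅ ⟨empty_subset _, pairwise_empty _⟩
  refine ⟨W, hW.prop.1, fun x hx y hy hxy => hW.prop.2 hx hy hxy.ne hxy, fun z hz hzW => ?_⟩
  by_contra hcon
  push Not at hcon
  have hins : insert z W ∈ S := ⟨insert_subset hz hW.prop.1,
    pairwise_insert.2 ⟨hW.prop.2, fun w hw _ => ⟨(hcon w hw).2, (hcon w hw).1⟩⟩⟩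
  exact hzW (hW.eq_of_subset hins (subset_insert z W) ▸ mem_insert z W)

variable {X : Set α} {far : α → α → Prop} {h s : ℕ}

theorem exists_ramseianOn_of_far
    (habs : ∀ x' ∈ X, ∀ x ∈ X, ∀ y ∈ X, ∀ y' ∈ X, x' ≤ x → x < y → y ≤ y' → far x y → far x' y')
    (hfree : ∀ S ⊆ X, (∀ x ∈ S, ∀ y ∈ S, x < y → ¬ far x y) →
      ∃ g, MapsTo g S (Icc 1 h) ∧ RamseianOn σ S g)
    (hchain : ∀ W ⊆ X, (∀ x ∈ W, ∀ y ∈ W, x < y → far x y) →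
      ∃ g, MapsTo g W (Icc 1 s) ∧ RamseianOn σ W g) :
    ∃ g, MapsTo g X (Icc 1 (h + 1 + s)) ∧ RamseianOn σ X g := by
  obtain ⟨W, hWX, hWfar, hWmax⟩ := exists_maximal_pairwise X far
  refine exists_ramseianOn_of_gapBlocks (P := fun z => ∃ w ∈ W, w < z ∧ ¬ far w z) hWX
    (hchain W hWX hWfar) ?_ fun z _ _ => hfree _ (sep_subset _ _) ?_
  · rintro z hz z' hz' hzz' ⟨w, hw, hwz, hwfar⟩ hPz'
    by_contra hle
    push Not at hle
    have hwz' : w < z' := lt_of_not_ge fun h => disjoint_left.1 hzz' hw (mem_uIcc_of_ge h hwz.le)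
    exact hwfar (habs w (hWX hw) w (hWX hw) z' hz' z hz le_rfl hwz' hle
      (by_contra fun hf => hPz' ⟨w, hw, hwz', hf⟩))
  · rintro x ⟨hx, hxz, hPx⟩ y ⟨hy, hyz, hPy⟩ hxy hfar
    have hxy' : Disjoint W (uIcc x y) := disjoint_uIcc_trans (uIcc_comm z x ▸ hxz) hyz
    by_cases hPy' : ∃ w ∈ W, w < y ∧ ¬ far w y
    · obtain ⟨w, hw, hwy, hwfar⟩ := hPy'
      have hwx : w < x := lt_of_not_ge fun h => disjoint_left.1 hxy' hw (mem_uIcc_of_le h hwy.le)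
      exact hwfar (habs w (hWX hw) x hx y hy y hy hwx.le hxy le_rfl hfar)
    · obtain ⟨w, hw, ⟨hwx, hwfar⟩ | ⟨hxw, hwfar⟩⟩ :=
        hWmax x hx fun hxW => disjoint_left.1 hxz hxW right_mem_uIcc
      · exact hPy' (hPy.2 (hPx.1 ⟨w, hw, hwx, hwfar⟩))
      · have hyw : y < w := lt_of_not_ge fun h => disjoint_left.1 hxy' hw (mem_uIcc_of_le hxw.le h)
        exact hwfar (habs x hx x hx y hy w (hWX hw) le_rfl hxy hyw.le hfar)

theorem exists_ramseianOn_of_far_of_not_touching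
    (habs : ∀ x' ∈ X, ∀ x ∈ X, ∀ y ∈ X, ∀ y' ∈ X, x' ≤ x → x < y → y ≤ y' → far x y → far x' y')
    (hfree : ∀ S ⊆ X, (∀ x ∈ S, ∀ y ∈ S, x < y → ¬ far x y) →
      ∃ g, MapsTo g S (Icc 1 h) ∧ RamseianOn σ S g)
    (htouch : ∀ x ∈ X, ∀ y ∈ X, ∀ z ∈ X, x < y → y < z → far x y → far y z → False) :
    ∃ g, MapsTo g X (Icc 1 (h + 1)) ∧ RamseianOn σ X g := by
  let L := {u ∈ X | ∀ x ∈ X, ∀ y ∈ X, x < y → far x y → u < y}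
  have hnotL : ∀ u ∈ X, u ∉ L → ∃ x ∈ X, ∃ y ∈ X, x < y ∧ far x y ∧ y ≤ u := fun u hu huL => by
    simpa [L, hu] using huL
  refine exists_ramseianOn_of_gapBlocks (W := ∅) (P := (· ∈ L)) (s := 0) (empty_subset X)
    ⟨0, mapsTo_empty _ _, fun _ hx => hx.elim⟩ ?_ fun z _ _ => hfree _ (sep_subset _ _) ?_
  · rintro z - z' hz' - hzL hz'L
    obtain ⟨x, hx, y, hy, hxy, hfar, hyz'⟩ := hnotL z' hz' hz'L
    exact (hzL.2 x hx y hy hxy hfar).trans_le hyz'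
  · rintro x ⟨hx, -, hxL⟩ y ⟨hy, -, hyL⟩ hxy hfar
    by_cases hyL' : y ∈ L
    · exact lt_irrefl y (hyL'.2 x hx y hy hxy hfar)
    · obtain ⟨x', hx', y', hy', hxy', hfar', hyx⟩ := hnotL x hx fun h => hyL' (hyL.2 (hxL.1 h))
      exact htouch x' hx' y' hy' y hy hxy' (hyx.trans_lt hxy) hfar'
        (habs y' hy' x hx y hy y hy hyx hxy le_rfl hfar)

end Far

section Smooth

variable {α N : Type*} [LinearOrder α] [Monoid N] [Finite N] {σ : α → α → N}

theorem IsAdditiveLabelling.exists_levels_below (hσ : IsAdditiveLabelling σ) {X : Set α}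
    {z : N} (hX : ∀ x ∈ X, ∀ y ∈ X, x < y → JEquiv (σ x y) z) {p : α} (hp : p ∈ X) :
    ∃ lev : α → ℕ, MapsTo lev {x ∈ X | x < p} (Icc 1 (jClass z).ncard) ∧
      ∀ x ∈ X, x < p → IsHomogeneous σ {y ∈ X | y < p ∧ lev y = lev x} := by
  classical
  by_cases hleft : ∃ x ∈ X, x < p
  swap
  · exact ⟨0, fun x hx => (hleft ⟨x, hx⟩).elim, fun x hx hxp => (hleft ⟨x, hx, hxp⟩).elim⟩
  obtain ⟨x₁, hx₁, hx₁p⟩ := hleft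
  have hgerm : ∀ x ∈ X, ∃ t ∈ jClass z, ∀ w ∈ X, w < x → LEquiv (σ w x) t := by
    intro x hx
    by_cases hw : ∃ w ∈ X, w < x
    · obtain ⟨w, hw, hwx⟩ := hw
      exact ⟨σ w x, hX w hw x hx hwx, fun w' hw' hw'x => hσ.lEquiv hX hw' hw hx hw'x hwx⟩
    · exact ⟨z, JEquiv.refl z, fun w hw' hwx => (hw ⟨w, hw', hwx⟩).elim⟩
  choose! germ hgermJ hgermL using hgerm
  have hcol : MapsTo (fun x => (σ x p, lClass (germ x))) {x ∈ X | x < p}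
      (lClass (σ x₁ p) ×ˢ (lClass '' jClass z)) :=
    fun x hx => ⟨hσ.lEquiv hX hx.1 hx₁ hp hx.2 hx₁p, germ x, hgermJ x hx.1, rfl⟩
  obtain ⟨lev, hlev, hlevcol⟩ := exists_levels (toFinite _) hcol
  refine ⟨lev, hlev.mono_right (Icc_subset_Icc_right (ncard_prod_lClass_le (hX x₁ hx₁ p hp hx₁p))),
    fun x₀ hx₀ hx₀p => isHomogeneous_of_forall ?_⟩
  have hH : ∀ x ∈ {y ∈ X | y < p ∧ lev y = lev x₀}, ∀ y ∈ {y ∈ X | y < p ∧ lev y = lev x₀},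
      x < y → IsIdempotentElem (σ x y) ∧ REquiv (σ x y) (σ x₀ p) ∧ LEquiv (σ x y) (germ x₀) := by
    rintro x ⟨hx, hxp, hlx⟩ y ⟨hy, hyp, hly⟩ hxy
    have hcx := hlevcol x ⟨hx, hxp⟩ x₀ ⟨hx₀, hx₀p⟩ hlx
    have hcy := hlevcol y ⟨hy, hyp⟩ x₀ ⟨hx₀, hx₀p⟩ hly
    simp only [Prod.mk.injEq] at hcx hcy
    have hfix : σ x y * σ y p = σ y p := by rw [hσ x y p hxy hyp, hcx.1, hcy.1]
    obtain ⟨hidem, hR⟩ := isIdempotentElem_and_rEquiv_of_mul_eq hfix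
      ((hX x hx y hy hxy).trans (hX y hy p hp hyp).symm)
    have hgerm_y : germ y ∈ lClass (germ x₀) := hcy.2 ▸ LEquiv.refl (germ y)
    exact ⟨hidem, hcy.1 ▸ hR, (hgermL y hy x hx hxy).trans hgerm_y⟩
  intro x hx y hy x' hx' y' hy' hxy hxy'
  obtain ⟨he, hRe, hLe⟩ := hH x hx y hy hxy
  obtain ⟨hf, hRf, hLf⟩ := hH x' hx' y' hy' hxy'
  exact ⟨he, eq_of_isIdempotentElem hf he (hRf.1.trans hRe.2) (hLe.1.trans hLf.2)⟩

theorem IsAdditiveLabelling.exists_ramseianOn_of_jEquiv (hσ : IsAdditiveLabelling σ)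
    {X : Set α} {z : N} (hX : ∀ x ∈ X, ∀ y ∈ X, x < y → JEquiv (σ x y) z) :
    ∃ g, MapsTo g X (Icc 1 ((jClass z).ncard + 1)) ∧ RamseianOn σ X g := by
  classical
  rcases X.eq_empty_or_nonempty with rfl | ⟨p, hp⟩
  · exact ⟨0, mapsTo_empty _ _, fun _ hx => hx.elim⟩
  obtain ⟨levL, hlevL, homL⟩ := hσ.exists_levels_below hX hp
  have : Finite Nᵐᵒᵖ := Finite.of_equiv N opEquiv
  obtain ⟨levR, hlevR, homR⟩ := hσ.dual.exists_levels_below (X := ofDual ⁻¹' X) (z := op z)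
    (fun x hx y hy hxy => jEquiv_op.2 (hX _ hy _ hx hxy)) (p := toDual p) hp
  rw [ncard_jClass_op] at hlevR
  set c := (jClass z).ncard
  set g := fun x => if x < p then levL x else if p < x then levR (toDual x) else c + 1
  have hgL : ∀ x, x < p → g x = levL x := fun x hx => if_pos hx
  have hgR : ∀ x, p < x → g x = levR (toDual x) := fun x hx => by
    simp only [g, if_neg hx.not_gt, if_pos hx]
  have hgp : g p = c + 1 := by simp [g]
  have hlow : ∀ x ∈ X, x ≠ p → 1 ≤ g x ∧ g x ≤ c := fun x hx hxp => by
    rcases hxp.lt_or_gt with hxp | hpx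
    · rw [hgL x hxp]; exact hlevL ⟨hx, hxp⟩
    · rw [hgR x hpx]; exact hlevR (show toDual x ∈ _ from ⟨hx, hpx⟩)
  have hnot : ∀ x ∈ X, x ≠ p → ∀ y ∈ neighbourClass X g x, p ∉ uIcc x y :=
      fun x hx hxp y hy hpxy => by
    have := hy.2.2 p hp hpxy
    have := hlow x hx hxp
    omega
  refine ⟨g, fun x hx => ?_, fun x hx => ?_⟩
  · by_cases hxp : x = p
    · rw [hxp, hgp]; exact ⟨Nat.le_add_left _ _, le_rfl⟩
    · exact ⟨(hlow x hx hxp).1, (hlow x hx hxp).2.trans c.le_succ⟩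
  rcases lt_trichotomy x p with hxp | rfl | hpx
  · refine (homL x hx hxp).mono fun y hy => ?_
    have hyp : y < p := lt_of_not_ge fun h => hnot x hx hxp.ne y hy (mem_uIcc_of_le hxp.le h)
    exact ⟨hy.1, hyp, by rw [← hgL y hyp, ← hgL x hxp]; exact hy.2.1⟩
  · refine (subsingleton_singleton (a := x)).isHomogeneous.mono fun y hy =>
      mem_singleton_iff.2 (by_contra fun hyx => ?_)
    have := hlow y hy.1 hyx
    have := hy.2.1
    omega
  · refine (homR (toDual x) hx hpx).of_dualLabelling.mono fun y hy => ?_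
    have hpy : p < y := lt_of_not_ge fun h => hnot x hx hpx.ne' y hy (mem_uIcc_of_ge h hpx.le)
    exact ⟨hy.1, hpy, by rw [← hgR y hpy, ← hgR x hpx]; exact hy.2.1⟩

end Smooth

section Induction

variable {α N : Type*} [LinearOrder α] [Monoid N] {σ : α → α → N} {X : Set α}

def labelJClasses (σ : α → α → N) (X : Set α) : Set N :=
  {m | ∃ x ∈ X, ∃ y ∈ X, x < y ∧ JEquiv m (σ x y)}

theorem jClass_subset_labelJClasses {a b : α} (ha : a ∈ X) (hb : b ∈ X) (hab : a < b) :
    jClass (σ a b) ⊆ labelJClasses σ X :=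
  fun _ hm => ⟨a, ha, b, hb, hab, hm⟩

theorem ncard_labelJClasses_le_sub [Finite N] {S : Set α} (hSX : S ⊆ X) {a b : α}
    (ha : a ∈ X) (hb : b ∈ X) (hab : a < b)
    (hS : ∀ x ∈ S, ∀ y ∈ S, x < y → ¬ JEquiv (σ x y) (σ a b)) :
    (labelJClasses σ S).ncard ≤ (labelJClasses σ X).ncard - (jClass (σ a b)).ncard := by
  rw [← ncard_sdiff (jClass_subset_labelJClasses ha hb hab)]
  exact ncard_le_ncard (fun _ ⟨x, hx, y, hy, hxy, hm⟩ => ⟨⟨x, hSX hx, y, hSX hy, hxy, hm⟩,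
    fun hmv => hS x hx y hy hxy (JEquiv.trans (JEquiv.symm hm) hmv)⟩) (toFinite _)

theorem ncard_jClass_lt_ncard_labelJClasses [Finite N] {a b x y : α} (ha : a ∈ X) (hb : b ∈ X)
    (hab : a < b) (hx : x ∈ X) (hy : y ∈ X) (hxy : x < y) (hxy' : ¬ JEquiv (σ x y) (σ a b)) :
    (jClass (σ a b)).ncard < (labelJClasses σ X).ncard :=
  ncard_lt_ncard ((ssubset_iff_of_subset (jClass_subset_labelJClasses ha hb hab)).2
    ⟨σ x y, ⟨x, hx, y, hy, hxy, JEquiv.refl _⟩, hxy'⟩) (toFinite _)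

theorem exists_jMinimal_label [Finite N] (σ : α → α → N) (hpair : ∃ a ∈ X, ∃ b ∈ X, a < b) :
    ∃ a ∈ X, ∃ b ∈ X, a < b ∧
      ∀ x ∈ X, ∀ y ∈ X, x < y → JLE (σ x y) (σ a b) → JLE (σ a b) (σ x y) := by
  obtain ⟨a, ha, b, hb, hab⟩ := hpair
  obtain ⟨_, ⟨a, ha, b, hb, hab, rfl⟩, hmin⟩ :=
    exists_jMinimal (V := {m | ∃ x ∈ X, ∃ y ∈ X, x < y ∧ σ x y = m}) ⟨_, a, ha, b, hb, hab, rfl⟩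
  exact ⟨a, ha, b, hb, hab, fun x hx y hy hxy => hmin _ ⟨x, hx, y, hy, hxy, rfl⟩⟩

theorem IsAdditiveLabelling.jEquiv_of_le (hσ : IsAdditiveLabelling σ) {v : N}
    (hmin : ∀ x ∈ X, ∀ y ∈ X, x < y → JLE (σ x y) v → JLE v (σ x y)) :
    ∀ x' ∈ X, ∀ x ∈ X, ∀ y ∈ X, ∀ y' ∈ X, x' ≤ x → x < y → y ≤ y' →
      JEquiv (σ x y) v → JEquiv (σ x' y') v := by
  intro x' hx' x _ y _ y' hy' hx'x hxy hyy' h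
  have hle : JLE (σ x' y') v := (hσ.jLE hx'x hxy hyy').trans h.1
  exact ⟨hle, hmin x' hx' y' hy' (hx'x.trans_lt (hxy.trans_le hyy')) hle⟩

theorem IsAdditiveLabelling.not_touching (hσ : IsAdditiveLabelling σ) {v : N}
    (habs : ∀ x' ∈ X, ∀ x ∈ X, ∀ y ∈ X, ∀ y' ∈ X, x' ≤ x → x < y → y ≤ y' →
      JEquiv (σ x y) v → JEquiv (σ x' y') v)
    (hc : (jClass v).ncard = 1) (hv : ¬ IsIdempotentElem v) :
    ∀ x ∈ X, ∀ y ∈ X, ∀ z ∈ X, x < y → y < z → JEquiv (σ x y) v → JEquiv (σ y z) v → False := by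
  intro x hx y hy z hz hxy hyz hfxy hfyz
  have hxz := (habs x hx x hx y hy z hz le_rfl hxy hyz.le hfxy).eq_of_ncard_jClass_eq_one hc
  refine hv ?_
  calc v * v = σ x y * σ y z := by
        rw [hfxy.eq_of_ncard_jClass_eq_one hc, hfyz.eq_of_ncard_jClass_eq_one hc]
    _ = v := (hσ x y z hxy hyz).trans hxz

theorem IsAdditiveLabelling.exists_ramseianOn_of_jEquiv_of_idempotent [Finite N]
    (hσ : IsAdditiveLabelling σ) {v : N} (hX : ∀ x ∈ X, ∀ y ∈ X, x < y → JEquiv (σ x y) v)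
    (hv : (jClass v).ncard = 1 → IsIdempotentElem v) :
    ∃ g, MapsTo g X (Icc 1 (2 * (jClass v).ncard - 1)) ∧ RamseianOn σ X g := by
  have := one_le_ncard_jClass v
  by_cases hc : (jClass v).ncard = 1
  · refine ⟨fun _ => 1, fun _ _ => ⟨le_rfl, show 1 ≤ _ by omega⟩, IsHomogeneous.ramseianOn
      ⟨v, hv hc, fun x hx y hy hxy => (hX x hx y hy hxy).eq_of_ncard_jClass_eq_one hc⟩⟩
  · obtain ⟨g, hg, hram⟩ := hσ.exists_ramseianOn_of_jEquiv hX
    exact ⟨g, hg.mono_right (Icc_subset_Icc_right (by omega)), hram⟩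

theorem IsAdditiveLabelling.exists_ramseianOn [Finite N] (hσ : IsAdditiveLabelling σ) (X : Set α) :
    ∃ g, MapsTo g X (Icc 1 (max 1 (2 * (labelJClasses σ X).ncard))) ∧ RamseianOn σ X g := by
  induction hn : (labelJClasses σ X).ncard using Nat.strong_induction_on generalizing X with
  | _ n ih =>
  by_cases hpair : ∃ a ∈ X, ∃ b ∈ X, a < b
  swap
  · push Not at hpair
    exact ⟨fun _ => 1, fun _ _ => ⟨le_rfl, le_max_left _ _⟩, IsHomogeneous.ramseianOn
      (isHomogeneous_of_forall fun x hx y hy _ _ _ _ hxy _ => absurd hxy (hpair x hx y hy).not_gt)⟩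
  obtain ⟨a, ha, b, hb, hab, hmin⟩ := exists_jMinimal_label σ hpair
  have habs := hσ.jEquiv_of_le hmin
  have hc := one_le_ncard_jClass (σ a b)
  have hcn : (jClass (σ a b)).ncard ≤ n :=
    hn ▸ ncard_le_ncard (jClass_subset_labelJClasses ha hb hab) (toFinite _)
  by_cases hsmooth : ∀ x ∈ X, ∀ y ∈ X, x < y → JEquiv (σ x y) (σ a b)
  · obtain ⟨g, hg, hram⟩ := hσ.exists_ramseianOn_of_jEquiv hsmooth
    exact ⟨g, hg.mono_right (Icc_subset_Icc_right (le_max_of_le_right (by omega))), hram⟩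
  push Not at hsmooth
  obtain ⟨x, hx, y, hy, hxy, hxy'⟩ := hsmooth
  have hcn' := hn ▸ ncard_jClass_lt_ncard_labelJClasses ha hb hab hx hy hxy hxy'
  have hfree : ∀ S ⊆ X, (∀ x ∈ S, ∀ y ∈ S, x < y → ¬ JEquiv (σ x y) (σ a b)) →
      ∃ g, MapsTo g S (Icc 1 (2 * (n - (jClass (σ a b)).ncard))) ∧ RamseianOn σ S g := by
    intro S hSX hS
    have hle := hn ▸ ncard_labelJClasses_le_sub hSX ha hb hab hS
    obtain ⟨g, hg, hram⟩ := ih _ (by omega) S rfl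
    exact ⟨g, hg.mono_right (Icc_subset_Icc_right (max_le (by omega) (by omega))), hram⟩
  by_cases hcut : (jClass (σ a b)).ncard = 1 ∧ ¬ IsIdempotentElem (σ a b)
  · obtain ⟨g, hg, hram⟩ := exists_ramseianOn_of_far_of_not_touching habs hfree
      (hσ.not_touching habs hcut.1 hcut.2)
    exact ⟨g, hg.mono_right (Icc_subset_Icc_right (le_max_of_le_right (by omega))), hram⟩
  · obtain ⟨g, hg, hram⟩ := exists_ramseianOn_of_far habs hfree fun W _ hW =>
      hσ.exists_ramseianOn_of_jEquiv_of_idempotent hW fun hc1 => not_not.1 fun h => hcut ⟨hc1, h⟩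
    exact ⟨g, hg.mono_right (Icc_subset_Icc_right (le_max_of_le_right (by omega))), hram⟩

end Induction

section Semigroup

variable {α M : Type} [LinearOrder α] [Semigroup M] [Finite M]

theorem exists_isIdempotentElem_of_finite [Nonempty M] : ∃ e : M, IsIdempotentElem e := by
  let : TopologicalSpace M := ⊥
  have : DiscreteTopology M := ⟨rfl⟩
  exact exists_idempotent_of_compact_t2_of_continuous_mul_left fun _ =>
    continuous_of_discreteTopology

theorem ncard_labelJClasses_coe_le (σ : α → α → M) (X : Set α) :
    (labelJClasses (fun x y => (σ x y : WithOne M)) X).ncard ≤ Nat.card M := by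
  have : Finite (WithOne M) := inferInstanceAs (Finite (Option M))
  refine (ncard_le_ncard ?_ (toFinite (range ((↑) : M → WithOne M)))).trans
    (ncard_range_of_injective WithOne.coe_injective).le
  rintro _ ⟨x, -, y, -, -, ⟨u, v, rfl⟩, -⟩
  induction u using WithOne.cases_on <;> induction v using WithOne.cases_on <;>
    simp [← WithOne.coe_mul]

theorem isRamseian_of_ramseianOn_coe {σ : α → α → M} {g : α → ℕ}
    (h : RamseianOn (fun x y => (σ x y : WithOne M)) univ g) : IsRamseian (· * ·) g σ := by
  intro x₀
  obtain ⟨e, he, hC⟩ := h x₀ (mem_univ _)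
  have hnb : ∀ x, Neighbour g x₀ x → x ∈ neighbourClass univ g x₀ :=
    fun x hx => ⟨mem_univ _, hx.1.symm, fun z _ hz => hx.2 z hz.1 hz.2⟩
  by_cases hpair : ∃ x y, Neighbour g x₀ x ∧ Neighbour g x₀ y ∧ x < y
  · obtain ⟨x, y, hx, hy, hxy⟩ := hpair
    have hxy' : (σ x y : WithOne M) = e := hC x (hnb x hx) y (hnb y hy) hxy
    refine ⟨σ x y, WithOne.coe_injective ?_, fun x' y' hx' hy' hxy'' =>
      WithOne.coe_injective ((hC x' (hnb x' hx') y' (hnb y' hy') hxy'').trans hxy'.symm)⟩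
    rw [WithOne.coe_mul, hxy', he.eq]
  · have : Nonempty M := ⟨σ x₀ x₀⟩
    obtain ⟨e, he⟩ := exists_isIdempotentElem_of_finite (M := M)
    exact ⟨e, he, fun x y hx hy hxy => (hpair ⟨x, y, hx, hy, hxy⟩).elim⟩

end Semigroup

/-- for every finite semigroup `(M, ·)`, every linear order `α`
and every additive labelling `σ` from `α` to `M`, there is a split
`g : α → {1, …, n}` of height `n ≤ 2|M|` that is Ramseian for `σ`. -/
theorem exists_ramseian_split {α M : Type} [LinearOrder α] [Finite M]
    (mul : M → M → M) (hassoc : ∀ a b c : M, mul (mul a b) c = mul a (mul b c))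
    (σ : α → α → M)
    (hadd : ∀ x y z : α, x < y → y < z → mul (σ x y) (σ y z) = σ x z) :
    ∃ n : ℕ, n ≤ 2 * Nat.card M ∧
      ∃ g : α → ℕ, (∀ x : α, 1 ≤ g x ∧ g x ≤ n) ∧ IsRamseian mul g σ := by
  let : Semigroup M := { mul := mul, mul_assoc := hassoc }
  have : Finite (WithOne M) := inferInstanceAs (Finite (Option M))
  have hσ : IsAdditiveLabelling fun x y => (σ x y : WithOne M) := fun x y z hxy hyz => by
    rw [← WithOne.coe_mul]
    exact congrArg _ (hadd x y z hxy hyz)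
  obtain ⟨g, hg, hram⟩ := hσ.exists_ramseianOn univ
  refine ⟨2 * Nat.card M, le_rfl, g, fun x => ?_, isRamseian_of_ramseianOn_coe hram⟩
  have : Nonempty M := ⟨σ x x⟩
  have := ncard_labelJClasses_coe_le σ univ
  have := Nat.card_pos (α := M)
  exact ⟨(hg (mem_univ x)).1, (hg (mem_univ x)).2.trans (max_le (by omega) (by omega))⟩
end

section
/- Let α be a countable linear order. For every condensation ∼ of α there exists a subset X ⊆ α such that ∼ coincides with ≈_X, i.e., for all x ≤ y in α: x ∼ y if and only if the closed interval [x,y] is contained in X or [x,y] is disjoint from X. -/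
/-!
Collapsing each class to a point gives a countable linear order (`Quotient.instLinearOrder`), and
`X` is the preimage of a 2-colouring of it in which no interval `[p, q]` with `p < q` is
monochromatic. To build one, index the points injectively by `ℕ` and call the points at finite
distance from each other a block. Colours alternate along each block, which settles every interval
containing a covering pair `a ⋖ b`. The least-indexed point of a block gets the colour opposite to
that of the greatest point below it with smaller index. An interval without covering pairs is
dense: if `u` is its interior point of least index and `v` the interior point of least index above
`u`, then `v` is alone in its block, and the point whose colour it flips lies in `[u, v)`.
-/

open Set Function

lemma Monotone.image_Icc_of_surjective {α β : Type*} [LinearOrder α] [LinearOrder β]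
    {f : α → β} (hf : Monotone f) (hsurj : Surjective f) {a b : α} (hab : a ≤ b) :
    f '' Icc a b = Icc (f a) (f b) := by
  refine hf.image_Icc_subset.antisymm fun s hs => ?_
  obtain ⟨w, rfl⟩ := hsurj s
  by_cases hwa : w < a
  · exact ⟨a, left_mem_Icc.2 hab, le_antisymm hs.1 (hf hwa.le)⟩
  by_cases hbw : b < w
  · exact ⟨b, right_mem_Icc.2 hab, le_antisymm (hf hbw.le) hs.2⟩
  exact ⟨w, ⟨not_lt.1 hwa, not_lt.1 hbw⟩, rfl⟩

lemma Set.subsingleton_image_bool_iff {γ : Type*} {f : γ → Bool} {s : Set γ} :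
    (f '' s).Subsingleton ↔ s ⊆ {z | f z} ∨ ∀ z ∈ s, z ∉ {z | f z} := by
  constructor
  · refine fun h => or_iff_not_imp_right.2 fun hs => ?_
    push Not at hs
    obtain ⟨z, hz, hfz⟩ := hs
    exact fun w hw => (h (mem_image_of_mem f hw) (mem_image_of_mem f hz)).trans hfz
  · rintro (h | h) _ ⟨a, ha, rfl⟩ _ ⟨b, hb, rfl⟩
    · exact (h ha).trans (h hb).symm
    · exact (Bool.eq_false_iff.2 (h a ha)).trans (Bool.eq_false_iff.2 (h b hb)).symm

section Coloring

variable {β : Type*} [LinearOrder β]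

lemma exists_covBy_of_finite_Icc {a b : β} (hab : a < b) (hfin : (Icc a b).Finite) :
    ∃ c ∈ Icc a b, ∃ d ∈ Icc a b, c ⋖ d := by
  obtain ⟨d, hd, hmin⟩ := exists_min_image (Ioc a b) id
    (hfin.subset Ioc_subset_Icc_self) ⟨b, hab, le_rfl⟩
  exact ⟨a, left_mem_Icc.2 hab.le, d, Ioc_subset_Icc_self hd, hd.1,
    fun z haz hzd => (hmin z ⟨haz, hzd.le.trans hd.2⟩).not_gt hzd⟩

lemma even_ncard_uIcc_iff_of_covBy {k a b : β} (hab : a ⋖ b) (hfin : (uIcc k a).Finite) :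
    Even (uIcc k b).ncard ↔ ¬ Even (uIcc k a).ncard := by
  rcases le_or_gt k a with hka | hak
  · have hIcc : Icc k b = insert b (Icc k a) := by
      rw [← Ico_insert_right (hka.trans hab.le), ← Ici_inter_Iio, hab.Iio_eq, Ici_inter_Iic]
    rw [uIcc_of_le hka, uIcc_of_le (hka.trans hab.le), hIcc,
      ncard_insert_of_notMem (fun h => hab.lt.not_ge h.2) (by rwa [uIcc_of_le hka] at hfin),
      Nat.even_add_one]
  · have hbk : b ≤ k := not_lt.1 fun hkb => hab.2 hak hkb
    have hIcc : Icc a k = insert a (Icc b k) := by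
      rw [← Ioc_insert_left (hab.lt.le.trans hbk), ← Ioi_inter_Iic, hab.Ioi_eq, Ici_inter_Iic]
    rw [uIcc_of_ge hak.le, hIcc] at hfin ⊢
    rw [uIcc_of_ge hbk, ncard_insert_of_notMem (fun h => hab.lt.not_ge h.1)
      (hfin.subset (subset_insert _ _)), Nat.even_add_one, not_not]

variable (e : β → ℕ)

noncomputable def blockAnchor (x : β) : β :=
  argminOn e {y | (uIcc x y).Finite} ⟨x, by simp⟩

open Classical in
/-- Testing `e (blockAnchor e x) < e x` rather than `blockAnchor e x ≠ x` keeps the recursion well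
founded without assuming `e` injective. -/
noncomputable def greedyColor (x : β) : Bool :=
  if e (blockAnchor e x) < e x then
    xor (greedyColor (blockAnchor e x)) (decide (Even (uIcc (blockAnchor e x) x).ncard))
  else if hm : ∃ m, IsGreatest {w | e w < e x ∧ w < x} m then
    !greedyColor hm.choose
  else true
termination_by e x
decreasing_by
  · assumption
  · exact hm.choose_spec.1.1

lemma finite_uIcc_blockAnchor (x : β) : (uIcc x (blockAnchor e x)).Finite :=
  argminOn_mem e {y | (uIcc x y).Finite} _

lemma e_blockAnchor_le (x : β) : e (blockAnchor e x) ≤ e x :=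
  argminOn_le e {y | (uIcc x y).Finite} (by simp)

lemma blockAnchor_eq_of_finite_uIcc {x y : β} (h : (uIcc x y).Finite) :
    blockAnchor e x = blockAnchor e y := by
  have hblock : {z | (uIcc x z).Finite} = {z | (uIcc y z).Finite} := by
    ext z
    constructor
    · exact fun hz =>
        ((h.subset (uIcc_comm y x).subset).union hz).subset uIcc_subset_uIcc_union_uIcc
    · exact fun hz => (h.union hz).subset uIcc_subset_uIcc_union_uIcc
  unfold blockAnchor
  congr 1

variable {e}

lemma greedyColor_eq_xor (he : Injective e) (x : β) :
    greedyColor e x =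
      xor (greedyColor e (blockAnchor e x)) (decide (Even (uIcc (blockAnchor e x) x).ncard)) := by
  obtain h | h := (e_blockAnchor_le e x).lt_or_eq
  · rw [greedyColor.eq_def e x, if_pos h]
  · rw [show blockAnchor e x = x from he h]
    simp

lemma greedyColor_ne_of_covBy (he : Injective e) {a b : β} (hab : a ⋖ b) :
    greedyColor e a ≠ greedyColor e b := by
  have hfin : (uIcc a b).Finite := by rw [uIcc_of_le hab.le, hab.Icc_eq]; exact toFinite _
  have hpar := even_ncard_uIcc_iff_of_covBy (k := blockAnchor e a) hab
    (uIcc_comm a _ ▸ finite_uIcc_blockAnchor e a)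
  rw [greedyColor_eq_xor he a, greedyColor_eq_xor he b,
    ← blockAnchor_eq_of_finite_uIcc e hfin, decide_eq_decide.2 hpar, decide_not]
  cases greedyColor e (blockAnchor e a) <;> cases decide (Even (uIcc (blockAnchor e a) a).ncard)
    <;> decide

lemma greedyColor_eq_not_of_isGreatest {x m : β} (hx : blockAnchor e x = x)
    (hm : IsGreatest {w | e w < e x ∧ w < x} m) : greedyColor e x = !greedyColor e m := by
  have hex : ∃ m, IsGreatest {w | e w < e x ∧ w < x} m := ⟨m, hm⟩
  rw [greedyColor.eq_def e x, if_neg (by rw [hx]; exact lt_irrefl _), dif_pos hex,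
    hex.choose_spec.unique hm]

lemma blockAnchor_eq_self_of_forall_not_covBy {p q x : β} (hx : x ∈ Ioo p q)
    (h : ∀ a ∈ Icc p q, ∀ b ∈ Icc p q, ¬ a ⋖ b) : blockAnchor e x = x := by
  by_contra hne
  have hfin := finite_uIcc_blockAnchor e x
  rcases lt_or_gt_of_ne hne with hk | hk
  · obtain ⟨c, hc, d, hd, hcd⟩ := exists_covBy_of_finite_Icc (max_lt hk hx.1)
      (hfin.subset (by rw [uIcc_of_ge hk.le]; exact Icc_subset_Icc_left (le_max_left _ _)))
    exact h c ⟨(le_max_right _ _).trans hc.1, hc.2.trans hx.2.le⟩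
      d ⟨(le_max_right _ _).trans hd.1, hd.2.trans hx.2.le⟩ hcd
  · obtain ⟨c, hc, d, hd, hcd⟩ := exists_covBy_of_finite_Icc (lt_min hk hx.2)
      (hfin.subset (by rw [uIcc_of_le hk.le]; exact Icc_subset_Icc_right (min_le_left _ _)))
    exact h c ⟨hx.1.le.trans hc.1, hc.2.trans (min_le_right _ _)⟩
      d ⟨hx.1.le.trans hd.1, hd.2.trans (min_le_right _ _)⟩ hcd

lemma greedyColor_image_Icc_nontrivial_of_forall_not_covBy (he : Injective e) {p q : β}
    (hpq : p < q) (h : ∀ a ∈ Icc p q, ∀ b ∈ Icc p q, ¬ a ⋖ b) :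
    (greedyColor e '' Icc p q).Nontrivial := by
  have hIoo : ∀ a ∈ Icc p q, a < q → (Ioo a q).Nonempty := fun a ha haq =>
    (not_covBy_iff_nonempty_Ioo haq).1 (h a ha q (right_mem_Icc.2 hpq.le))
  set u := argminOn e (Ioo p q) (hIoo p (left_mem_Icc.2 hpq.le) hpq)
  have hu : u ∈ Ioo p q := argminOn_mem _ _ _
  set v := argminOn e (Ioo u q) (hIoo u (Ioo_subset_Icc_self hu) hu.2)
  have hv : v ∈ Ioo u q := argminOn_mem _ _ _
  have hvpq : v ∈ Ioo p q := ⟨hu.1.trans hv.1, hv.2⟩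
  have heuv : e u < e v := (argminOn_le e _ hvpq).lt_of_ne (he.ne hv.1.ne)
  obtain ⟨m, hm, hmax⟩ := exists_max_image {w | e w < e v ∧ w < v} id
    (((finite_Iio (e v)).preimage he.injOn).subset fun w hw => hw.1) ⟨u, heuv, hv.1⟩
  have hum : u ≤ m := hmax u ⟨heuv, hv.1⟩
  refine ⟨_, mem_image_of_mem _ ⟨hu.1.le.trans hum, hm.2.le.trans hv.2.le⟩,
    _, mem_image_of_mem _ (Ioo_subset_Icc_self hvpq), ?_⟩
  rw [greedyColor_eq_not_of_isGreatest
    (blockAnchor_eq_self_of_forall_not_covBy hvpq h) ⟨hm, hmax⟩]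
  exact Bool.ne_not.2 rfl

theorem exists_bool_coloring_image_Icc_nontrivial [Countable β] :
    ∃ c : β → Bool, ∀ p q, p < q → (c '' Icc p q).Nontrivial := by
  obtain ⟨e, he⟩ := Countable.exists_injective_nat β
  refine ⟨greedyColor e, fun p q hpq => ?_⟩
  by_cases hcov : ∃ a ∈ Icc p q, ∃ b ∈ Icc p q, a ⋖ b
  · obtain ⟨a, ha, b, hb, hab⟩ := hcov
    exact ⟨_, mem_image_of_mem _ ha, _, mem_image_of_mem _ hb, greedyColor_ne_of_covBy he hab⟩
  · push Not at hcov
    exact greedyColor_image_Icc_nontrivial_of_forall_not_covBy he hpq hcov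

end Coloring

lemma ordConnected_preimage_quotient_mk {α : Type*} [LinearOrder α] {r : α → α → Prop}
    (hequiv : Equivalence r) (hconv : ∀ x y z : α, x < y → y < z → r x z → r x y ∧ r y z)
    (q : Quotient ⟨r, hequiv⟩) : OrdConnected (Quotient.mk _ ⁻¹' {q}) := by
  refine ⟨fun x hx y hy z hz => ?_⟩
  have hxy : r x y := Quotient.exact (hx.trans hy.symm)
  rcases hz.1.eq_or_lt with rfl | hxz
  · exact hx
  rcases hz.2.eq_or_lt with rfl | hzy
  · exact hy
  exact (Quotient.sound (hequiv.symm (hconv x z y hxz hzy hxy).1)).trans hx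

/-- every condensation of a countable linear order is encoded by
a set: for every equivalence relation `r` on `α` with convex classes there is
`X ⊆ α` such that for all `x ≤ y`, `x ∼ y` iff `[x, y] ⊆ X` or
`[x, y] ∩ X = ∅`. -/
theorem condensation_encoded_by_set {α : Type} [LinearOrder α] [Countable α]
    (r : α → α → Prop) (hequiv : Equivalence r)
    (hconv : ∀ x y z : α, x < y → y < z → r x z → r x y ∧ r y z) :
    ∃ X : Set α, ∀ x y : α, x ≤ y →
      (r x y ↔ (Set.Icc x y ⊆ X ∨ ∀ z ∈ Set.Icc x y, z ∉ X)) := by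
  let S : Setoid α := ⟨r, hequiv⟩
  have := ordConnected_preimage_quotient_mk hequiv hconv
  classical
  obtain ⟨c, hc⟩ := exists_bool_coloring_image_Icc_nontrivial (β := Quotient S)
  refine ⟨{z | c (Quotient.mk S z)}, fun x y hxy => ?_⟩
  rw [← subsingleton_image_bool_iff, ← image_image c (Quotient.mk S),
    Quotient.mk_monotone.image_Icc_of_surjective Quotient.mk_surjective hxy,
    ← show Quotient.mk S x = Quotient.mk S y ↔ r x y from Quotient.eq]
  constructor
  · intro h
    rw [h, Icc_self, image_singleton]
    exact subsingleton_singleton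
  · intro h
    by_contra hne
    exact (hc _ _ ((Quotient.mk_monotone hxy).lt_of_ne hne)).not_subsingleton h
end
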